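/- arXiv:2010.04912 — 10 statements merged into one kernel-verified Lean document; each statement's English description precedes it below -/
import Mathlib

section
/- Let n ≥ 1, c > 0, and let W, w ∈ ℝⁿ (Euclidean space) with ‖w‖₂ ≤ c. Then (1 + ⟨W, W + w⟩) / (√(1 + ‖W‖₂²) · √(1 + ‖W + w‖₂²)) ≥ min( 1/√(1 + c²), (4 − c²)/(4 + c²) ). -/
set_option maxHeartbeats 1000000 in
/-- For `W, w ∈ ℝⁿ` with `‖w‖₂ ≤ c` (`n ≥ 1`, `c > 0`),
`(1 + ⟨W, W + w⟩) / (√(1 + ‖W‖₂²) · √(1 + ‖W + w‖₂²))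
  ≥ min (1/√(1 + c²)) ((4 − c²)/(4 + c²))`. -/
theorem cos_dihedral_angle_ge (n : ℕ) (hn : 1 ≤ n) (c : ℝ) (hc : 0 < c)
    (W w : Fin n → ℝ) (hw : Real.sqrt (∑ i, w i ^ 2) ≤ c) :
    (1 + ∑ i, W i * (W i + w i)) /
        (Real.sqrt (1 + ∑ i, W i ^ 2) * Real.sqrt (1 + ∑ i, (W i + w i) ^ 2)) ≥
      min (1 / Real.sqrt (1 + c ^ 2)) ((4 - c ^ 2) / (4 + c ^ 2)) := by
  set A := ∑ i, W i ^ 2 with hA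
  set B := ∑ i, (W i + w i) ^ 2 with hB
  set I := ∑ i, W i * (W i + w i) with hI
  set d2 := ∑ i, w i ^ 2 with hd2
  have hA0 : 0 ≤ A := Finset.sum_nonneg fun i _ => sq_nonneg _
  have hB0 : 0 ≤ B := Finset.sum_nonneg fun i _ => sq_nonneg _
  have hd20 : 0 ≤ d2 := Finset.sum_nonneg fun i _ => sq_nonneg _
  have hpol : A + B - 2 * I = d2 := by
    rw [hA, hB, hI, hd2, Finset.mul_sum, ← Finset.sum_add_distrib, ← Finset.sum_sub_distrib]
    exact Finset.sum_congr rfl fun i _ => by ring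
  have hCS : I ^ 2 ≤ A * B := Finset.sum_mul_sq_le_sq_mul_sq Finset.univ W (fun i => W i + w i)
  have hc2 : d2 ≤ c ^ 2 := by
    nlinarith [Real.sq_sqrt hd20, Real.sqrt_nonneg d2]
  set Sa := Real.sqrt (1 + A) with hSa
  set Sb := Real.sqrt (1 + B) with hSb
  have hSa0 : 0 < Sa := Real.sqrt_pos.2 (by linarith)
  have hSb0 : 0 < Sb := Real.sqrt_pos.2 (by linarith)
  have hSa2 : Sa ^ 2 = 1 + A := Real.sq_sqrt (by linarith)
  have hSb2 : Sb ^ 2 = 1 + B := Real.sq_sqrt (by linarith)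
  set g := Real.sqrt (A * B) with hg
  have hg0 : 0 ≤ g := Real.sqrt_nonneg _
  have hg2 : g ^ 2 = A * B := Real.sq_sqrt (mul_nonneg hA0 hB0)
  have hIg : -g ≤ I := by nlinarith [sq_nonneg (I + g)]
  have hgAB : 2 * g ≤ A + B := by
    have h1 : Real.sqrt (A * B) ≤ Real.sqrt (((A + B) / 2) ^ 2) :=
      Real.sqrt_le_sqrt (by nlinarith [sq_nonneg (A - B)])
    rw [Real.sqrt_sq (by positivity)] at h1
    rw [hg]; linarith
  have hDg : 1 + g ≤ Sa * Sb := by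
    rw [hSa, hSb, ← Real.sqrt_mul (by linarith)]
    rw [Real.le_sqrt (by positivity) (by nlinarith)]
    nlinarith
  have key : (1 + I) / (Sa * Sb) ≥ (4 - c ^ 2) / (4 + c ^ 2) := by
    rw [ge_iff_le, div_le_div_iff₀ (by positivity) (mul_pos hSa0 hSb0)]
    rcases le_total (Sa * Sb) (1 + c ^ 2 / 4) with h | h
    · -- small denominator case: use 1 + I ≥ 1 - g
      have hgq : g ≤ c ^ 2 / 4 := by linarith
      have he0 : 0 ≤ Sa * Sb - (1 + g) := by linarith
      nlinarith [mul_nonneg hg0 he0, mul_nonneg (by linarith : (0:ℝ) ≤ c ^ 2 / 4 - g) he0,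
        mul_le_mul_of_nonneg_right hIg (by positivity : (0:ℝ) ≤ 4 + c ^ 2)]
    · -- large denominator case: use 2 * (1 + I) ≥ 2 * Sa * Sb - c ^ 2
      have h2I : 2 * (1 + I) ≥ 2 * (Sa * Sb) - c ^ 2 := by
        nlinarith [sq_nonneg (Sa - Sb)]
      nlinarith [mul_nonneg (sq_nonneg c) (by linarith : (0:ℝ) ≤ Sa * Sb - (1 + c ^ 2 / 4))]
  exact le_trans (min_le_right _ _) key
end

section
/- Let n ≥ 1, c > 0, and let W, w ∈ ℝⁿ (Euclidean space) with ‖w‖₂ ≤ ‖W‖₂ and ‖w‖₂ ≤ c. Then (1 + ⟨W, W + w⟩) / (√(1 + ‖W‖₂²) · √(1 + ‖W + w‖₂²)) ≥ 1/√(1 + c²). -/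
/-- For `W, w ∈ ℝⁿ` with `‖w‖₂ ≤ ‖W‖₂` and `‖w‖₂ ≤ c` (`n ≥ 1`, `c > 0`),
`(1 + ⟨W, W + w⟩) / (√(1 + ‖W‖₂²) · √(1 + ‖W + w‖₂²)) ≥ 1/√(1 + c²)`. -/
theorem cos_dihedral_angle_case1 (n : ℕ) (hn : 1 ≤ n) (c : ℝ) (hc : 0 < c)
    (W w : Fin n → ℝ)
    (hwW : Real.sqrt (∑ i, w i ^ 2) ≤ Real.sqrt (∑ i, W i ^ 2))
    (hw : Real.sqrt (∑ i, w i ^ 2) ≤ c) :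
    (1 + ∑ i, W i * (W i + w i)) /
        (Real.sqrt (1 + ∑ i, W i ^ 2) * Real.sqrt (1 + ∑ i, (W i + w i) ^ 2)) ≥
      1 / Real.sqrt (1 + c ^ 2) := by
  set a2 := ∑ i, W i ^ 2 with ha2
  set b2 := ∑ i, w i ^ 2 with hb2
  set s := ∑ i, W i * w i with hs
  have ha : (0:ℝ) ≤ a2 := Finset.sum_nonneg fun i _ => sq_nonneg _
  have hb : (0:ℝ) ≤ b2 := Finset.sum_nonneg fun i _ => sq_nonneg _
  -- Cauchy–Schwarz
  have hcs : s ^ 2 ≤ a2 * b2 := by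
    simpa [ha2, hb2, hs, mul_pow] using Finset.sum_mul_sq_le_sq_mul_sq Finset.univ W w
  -- b2 ≤ a2
  have hba : b2 ≤ a2 := by
    nlinarith [Real.sq_sqrt hb, Real.sq_sqrt ha, Real.sqrt_nonneg b2, Real.sqrt_nonneg a2,
      mul_self_le_mul_self (Real.sqrt_nonneg b2) hwW]
  -- b2 ≤ c^2
  have hbc : b2 ≤ c ^ 2 := by
    nlinarith [Real.sq_sqrt hb, Real.sqrt_nonneg b2]
  -- rewrite sums
  have hsum1 : ∑ i, W i * (W i + w i) = a2 + s := by
    rw [ha2, hs, ← Finset.sum_add_distrib]; congr 1; ext i; ring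
  have hsum2 : ∑ i, (W i + w i) ^ 2 = a2 + 2 * s + b2 := by
    rw [ha2, hb2, hs, Finset.mul_sum, ← Finset.sum_add_distrib, ← Finset.sum_add_distrib]
    congr 1; ext i; ring
  rw [hsum1, hsum2]
  -- s ≥ -a2
  have hsge : -a2 ≤ s := by nlinarith [mul_le_mul hba (le_refl a2) ha ha]
  have hP : (0:ℝ) < 1 + a2 + s := by linarith
  have hA : (0:ℝ) < 1 + a2 := by linarith
  have hB : (0:ℝ) < 1 + (a2 + 2 * s + b2) := by nlinarith
  -- key inequality
  have key : (1 + a2) * (1 + (a2 + 2 * s + b2)) ≤ (1 + a2 + s) ^ 2 * (1 + c ^ 2) := by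
    have h1 : 0 ≤ (1 + b2) * ((1 + a2 + s) ^ 2 * b2 + s ^ 2 - (1 + a2) * b2) := by
      nlinarith [sq_nonneg (s * (1 + b2) + (1 + a2) * b2),
        mul_nonneg (mul_nonneg (by linarith : (0:ℝ) ≤ 1 + a2) hb) (by linarith : (0:ℝ) ≤ a2 - b2)]
    have h2 : (1 + a2) * b2 - s ^ 2 ≤ (1 + a2 + s) ^ 2 * b2 := by nlinarith
    nlinarith [sq_nonneg (1 + a2 + s), mul_le_mul_of_nonneg_left hbc (sq_nonneg (1 + a2 + s))]
  rw [ge_iff_le, div_le_div_iff₀ (Real.sqrt_pos.2 (by positivity)) (by positivity)]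
  rw [one_mul, ← Real.sqrt_mul (le_of_lt hA)]
  calc Real.sqrt ((1 + a2) * (1 + (a2 + 2 * s + b2)))
      ≤ Real.sqrt ((1 + a2 + s) ^ 2 * (1 + c ^ 2)) := Real.sqrt_le_sqrt key
    _ = (1 + (a2 + s)) * Real.sqrt (1 + c ^ 2) := by
        rw [Real.sqrt_mul (sq_nonneg _), Real.sqrt_sq hP.le]; ring
end

section
/- Let c > 0 and let T, K be real numbers with T ≥ 0, K ≥ 0 and T + K ≤ c. Then (1 − T·K) / (√(1 + K²) · √(1 + T²)) ≥ (4 − c²)/(4 + c²). -/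
/-- From `a² ≤ b²` with `a, b ≥ 0` we get `a ≤ b`. -/
lemma aux_le_of_sq_le_sq {a b : ℝ} (ha : 0 ≤ a) (hb : 0 ≤ b) (h : a ^ 2 ≤ b ^ 2) :
    a ≤ b := by nlinarith

/-- For `c > 0` and reals `T, K ≥ 0` with `T + K ≤ c`,
`(1 − T·K) / (√(1 + K²) · √(1 + T²)) ≥ (4 − c²)/(4 + c²)`. -/
theorem cos_dihedral_angle_case2 (c T K : ℝ) (hc : 0 < c) (hT : 0 ≤ T) (hK : 0 ≤ K)
    (hTK : T + K ≤ c) :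
    (1 - T * K) / (Real.sqrt (1 + K ^ 2) * Real.sqrt (1 + T ^ 2)) ≥
      (4 - c ^ 2) / (4 + c ^ 2) := by
  have hD : 0 < Real.sqrt (1 + K ^ 2) * Real.sqrt (1 + T ^ 2) := by positivity
  set D := Real.sqrt (1 + K ^ 2) * Real.sqrt (1 + T ^ 2) with hDdef
  have hD2 : D ^ 2 = (1 - T * K) ^ 2 + (T + K) ^ 2 := by
    rw [hDdef, mul_pow, Real.sq_sqrt (by positivity), Real.sq_sqrt (by positivity)]
    ring
  rw [ge_iff_le, div_le_div_iff₀ (by positivity) hD]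
  have hs : 0 ≤ T + K := add_nonneg hT hK
  -- key: 4c(1-TK) - (4-c²)(T+K) = (c-(T+K))(4+c(T+K)) + c(T-K)² ≥ 0
  have key : 0 ≤ 4 * c * (1 - T * K) - (4 - c ^ 2) * (T + K) := by
    nlinarith [mul_nonneg (sub_nonneg.2 hTK)
        (by positivity : (0:ℝ) ≤ 4 + c * (T + K)),
      mul_nonneg hc.le (sq_nonneg (T - K))]
  rcases le_or_gt (1 - T * K) 0 with hu | hu
  · -- 1 - TK ≤ 0: then TK ≥ 1, (T+K)² ≥ 4TK ≥ 4, so c² ≥ 4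
    have hc4 : (4:ℝ) ≤ c ^ 2 := by
      nlinarith [sq_nonneg (T - K), mul_self_le_mul_self hs hTK]
    have hA : 0 ≤ 4 * c * (T * K - 1) := by
      have := mul_nonneg hc.le (by linarith : 0 ≤ T * K - 1); nlinarith
    have hAB : 4 * c * (T * K - 1) ≤ (c ^ 2 - 4) * (T + K) := by linarith [key]
    have hsq : (4 * c * (T * K - 1)) ^ 2 ≤ ((c ^ 2 - 4) * (T + K)) ^ 2 :=
      pow_le_pow_left₀ hA hAB 2
    have hb2 : ((c ^ 2 - 4) * D) ^ 2
        = (c ^ 2 - 4) ^ 2 * ((1 - T * K) ^ 2 + (T + K) ^ 2) := by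
      rw [mul_pow, hD2]
    have h1 : ((4 + c ^ 2) * (T * K - 1)) ^ 2 ≤ ((c ^ 2 - 4) * D) ^ 2 := by
      linarith [hsq, hb2.le, hb2.ge]
    have hab : (4 + c ^ 2) * (T * K - 1) ≤ (c ^ 2 - 4) * D :=
      aux_le_of_sq_le_sq (mul_nonneg (by positivity) (by linarith))
        (mul_nonneg (by linarith) hD.le) h1
    linarith [hab]
  · rcases le_or_gt (c ^ 2) 4 with h4 | h4
    · have hA : 0 ≤ (4 - c ^ 2) * (T + K) := mul_nonneg (by linarith) hs
      have hAB : (4 - c ^ 2) * (T + K) ≤ 4 * c * (1 - T * K) := by linarith [key]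
      have hsq : ((4 - c ^ 2) * (T + K)) ^ 2 ≤ (4 * c * (1 - T * K)) ^ 2 :=
        pow_le_pow_left₀ hA hAB 2
      have ha2 : ((4 - c ^ 2) * D) ^ 2
          = (4 - c ^ 2) ^ 2 * ((1 - T * K) ^ 2 + (T + K) ^ 2) := by
        rw [mul_pow, hD2]
      have h1 : ((4 - c ^ 2) * D) ^ 2 ≤ ((4 + c ^ 2) * (1 - T * K)) ^ 2 := by
        linarith [hsq, ha2.le, ha2.ge]
      have hab : (4 - c ^ 2) * D ≤ (4 + c ^ 2) * (1 - T * K) :=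
        aux_le_of_sq_le_sq (mul_nonneg (by linarith) hD.le)
          (mul_nonneg (by positivity) hu.le) h1
      linarith [hab]
    · have h1 : (4 - c ^ 2) * D ≤ 0 :=
        mul_nonpos_of_nonpos_of_nonneg (by linarith) hD.le
      nlinarith [h1, mul_pos (by positivity : (0:ℝ) < 4 + c ^ 2) hu]
end

section
/- Let n, p ≥ 1, c > 0, and let H : ℝⁿ → ℝ² be given by H(x) = L · ReLU(Wx + b) + d, where W is a real p×n matrix, b ∈ ℝ^p, L is a real 2×p matrix, d ∈ ℝ², and every row of W and every row of L has Euclidean norm at most c. If x ∈ ℝⁿ satisfies H(x)_0 > H(x)_1, then for every α ∈ ℝⁿ with ‖α‖₂ < (H(x)_0 − H(x)_1)/(2·√p·c²), one has H(x+α)_0 > H(x+α)_1. -/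
open Finset

/-- abs Cauchy-Schwarz for finite sums. -/
lemma cs_abs {m : ℕ} (v u : Fin m → ℝ) :
    |∑ j, v j * u j| ≤ Real.sqrt (∑ j, v j ^ 2) * Real.sqrt (∑ j, u j ^ 2) := by
  have h1 := Real.sum_mul_le_sqrt_mul_sqrt Finset.univ v u
  have h2 := Real.sum_mul_le_sqrt_mul_sqrt Finset.univ (fun j => -v j) u
  have e1 : ∑ j, (-v j) * u j = -∑ j, v j * u j := by
    rw [← Finset.sum_neg_distrib]; congr 1; funext j; ring
  have e2 : ∑ j, (-v j) ^ 2 = ∑ j, v j ^ 2 := by simp [neg_sq]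
  rw [e1, e2] at h2
  rw [abs_le]
  exact ⟨by linarith, h1⟩

/-- For the one-hidden-layer network `H x = L · ReLU(W x + b) + d`
(`W : p × n`, `L : 2 × p`, every row of `W` and of `L` of Euclidean norm at most `c > 0`),
if `H x 0 > H x 1`, then for every `α` with `‖α‖₂ < (H x 0 − H x 1)/(2 √p c²)`, one has
`H (x+α) 0 > H (x+α) 1`. -/
theorem one_layer_pointwise_robustness (n p : ℕ) (hn : 1 ≤ n) (hp : 1 ≤ p) (c : ℝ) (hc : 0 < c)
    (W : Matrix (Fin p) (Fin n) ℝ) (b : Fin p → ℝ)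
    (L : Matrix (Fin 2) (Fin p) ℝ) (d : Fin 2 → ℝ)
    (hW : ∀ i, Real.sqrt (∑ j, W i j ^ 2) ≤ c)
    (hL : ∀ i, Real.sqrt (∑ j, L i j ^ 2) ≤ c)
    (H : (Fin n → ℝ) → Fin 2 → ℝ)
    (hH : ∀ x, H x = L.mulVec (fun i => max (W.mulVec x i + b i) 0) + d) :
    ∀ x : Fin n → ℝ, H x 0 > H x 1 →
      ∀ α : Fin n → ℝ,
        Real.sqrt (∑ i, α i ^ 2) < (H x 0 - H x 1) / (2 * Real.sqrt p * c ^ 2) →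
        H (x + α) 0 > H (x + α) 1 := by
  intro x hx α hα
  set a := Real.sqrt (∑ i, α i ^ 2) with ha_def
  have ha0 : 0 ≤ a := Real.sqrt_nonneg _
  have hsp : 0 < Real.sqrt p := Real.sqrt_pos.2 (by exact_mod_cast hp)
  -- perturbation of hidden layer
  set Δ : Fin p → ℝ := fun j =>
    max (W.mulVec (x + α) j + b j) 0 - max (W.mulVec x j + b j) 0 with hΔ
  have hΔ_bound : ∀ j, |Δ j| ≤ c * a := by
    intro j
    have h1 : |Δ j| ≤ |W.mulVec (x + α) j + b j - (W.mulVec x j + b j)| :=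
      abs_max_sub_max_le_abs _ _ _
    have h2 : W.mulVec (x + α) j + b j - (W.mulVec x j + b j) = W.mulVec α j := by
      rw [Matrix.mulVec_add]; simp
    rw [h2] at h1
    have h3 : |W.mulVec α j| ≤ Real.sqrt (∑ k, W j k ^ 2) * a := by
      simpa [Matrix.mulVec, dotProduct] using cs_abs (W j) α
    refine h1.trans (h3.trans ?_)
    exact mul_le_mul_of_nonneg_right (hW j) ha0
  -- output perturbation bound
  have hout : ∀ i : Fin 2, |H (x + α) i - H x i| ≤ Real.sqrt p * c ^ 2 * a := by
    intro i
    have hdiff : H (x + α) i - H x i = ∑ j, L i j * Δ j := by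
      rw [hH, hH]
      simp only [Pi.add_apply, Matrix.mulVec, dotProduct, hΔ, mul_sub]
      rw [Finset.sum_sub_distrib]
      ring
    rw [hdiff]
    have h1 := cs_abs (L i) Δ
    have h2 : Real.sqrt (∑ j, Δ j ^ 2) ≤ Real.sqrt p * (c * a) := by
      have hsum : ∑ j, Δ j ^ 2 ≤ ∑ _j : Fin p, (c * a) ^ 2 := by
        apply Finset.sum_le_sum
        intro j _
        have := hΔ_bound j
        calc Δ j ^ 2 = |Δ j| ^ 2 := (sq_abs _).symm
          _ ≤ (c * a) ^ 2 := by
              apply pow_le_pow_left₀ (abs_nonneg _) this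
      have : Real.sqrt (∑ j, Δ j ^ 2) ≤ Real.sqrt (p * (c * a) ^ 2) := by
        apply Real.sqrt_le_sqrt
        simpa using hsum
      refine this.trans_eq ?_
      rw [Real.sqrt_mul (by positivity), Real.sqrt_sq (by positivity)]
    calc |∑ j, L i j * Δ j| ≤ Real.sqrt (∑ j, L i j ^ 2) * Real.sqrt (∑ j, Δ j ^ 2) := h1
      _ ≤ c * (Real.sqrt p * (c * a)) := by
          apply mul_le_mul (hL i) h2 (Real.sqrt_nonneg _) hc.le
      _ = Real.sqrt p * c ^ 2 * a := by ring
  have h0 := hout 0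
  have h1 := hout 1
  rw [abs_le] at h0 h1
  have hkey : 2 * Real.sqrt p * c ^ 2 * a < H x 0 - H x 1 := by
    have hpos : 0 < 2 * Real.sqrt p * c ^ 2 := by positivity
    have := (lt_div_iff₀ hpos).1 hα
    linarith
  linarith
end

section
/- Let m ≥ 1 be an integer, let ε ≥ 0 and γ be reals with γ > 2ε, let G be a finite index set with γ·m ≤ |G| ≤ m, and let (T_i)_{i∈G} be real numbers with Σ_{i∈G} (1 − T_i)² ≤ 2mε. Then Σ_{i∈G} T_i ≥ m·(γ − √(2εγ)). -/
/-- If `m ≥ 1`, `ε ≥ 0`, `γ > 2ε`, `G` is a finite index set with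
`γ·m ≤ |G| ≤ m`, and `(T i)_{i ∈ G}` are reals with `Σ_{i∈G} (1 − T i)² ≤ 2mε`, then
`Σ_{i∈G} T i ≥ m·(γ − √(2εγ))`. -/
theorem margin_sum_lower_bound {ι : Type*} (m : ℕ) (hm : 1 ≤ m) (ε γ : ℝ)
    (hε : 0 ≤ ε) (hγ : 2 * ε < γ)
    (G : Finset ι) (hG1 : γ * m ≤ G.card) (hG2 : (G.card : ℝ) ≤ m)
    (T : ι → ℝ) (hT : ∑ i ∈ G, (1 - T i) ^ 2 ≤ 2 * m * ε) :
    ∑ i ∈ G, T i ≥ m * (γ - Real.sqrt (2 * ε * γ)) := by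
  have hm' : (1 : ℝ) ≤ m := by exact_mod_cast hm
  have hγ0 : 0 < γ := lt_of_le_of_lt (by linarith) hγ
  set c : ℝ := (G.card : ℝ) with hc
  have hc0 : 0 ≤ c := Nat.cast_nonneg _
  set S : ℝ := ∑ i ∈ G, (1 - T i) with hS
  have hsum : ∑ i ∈ G, T i = c - S := by
    simp [hS, Finset.sum_sub_distrib, hc]
  have hsq : S ^ 2 ≤ c * (2 * m * ε) := by
    calc S ^ 2 ≤ c * ∑ i ∈ G, (1 - T i) ^ 2 := by
          have := sq_sum_le_card_mul_sum_sq (s := G) (f := fun i => 1 - T i)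
          exact_mod_cast this
      _ ≤ c * (2 * m * ε) := by
          exact mul_le_mul_of_nonneg_left hT hc0
  set a := Real.sqrt c with ha
  set b := Real.sqrt (γ * m) with hb
  set k := Real.sqrt (2 * m * ε) with hk
  have hK0 : (0:ℝ) ≤ 2 * m * ε := by positivity
  have ha2 : a ^ 2 = c := Real.sq_sqrt hc0
  have hb2 : b ^ 2 = γ * m := Real.sq_sqrt (by positivity)
  have hk2 : k ^ 2 = 2 * m * ε := Real.sq_sqrt hK0
  have ha0 : 0 ≤ a := Real.sqrt_nonneg _
  have hb0 : 0 ≤ b := Real.sqrt_nonneg _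
  have hk0 : 0 ≤ k := Real.sqrt_nonneg _
  have hab : b ≤ a := Real.sqrt_le_sqrt hG1
  -- k ≤ 2 b since 2mε ≤ 4γm
  have hkb : k ≤ 2 * b := by
    nlinarith [sq_nonneg (k - 2*b)]
  -- S ≤ a * k
  have hSak : S ≤ a * k := by
    have : S ≤ Real.sqrt (c * (2 * m * ε)) := by
      calc S ≤ |S| := le_abs_self _
        _ = Real.sqrt (S ^ 2) := (Real.sqrt_sq_eq_abs S).symm
        _ ≤ Real.sqrt (c * (2 * m * ε)) := Real.sqrt_le_sqrt hsq
    rwa [Real.sqrt_mul hc0] at this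
  -- m * sqrt (2εγ) = b * k
  have hbk : (m : ℝ) * Real.sqrt (2 * ε * γ) = b * k := by
    rw [hb, hk, ← Real.sqrt_mul (show (0:ℝ) ≤ γ * m by positivity)]
    rw [show γ * (m:ℝ) * (2 * m * ε) = (m:ℝ)^2 * (2 * ε * γ) by ring,
      Real.sqrt_mul (show (0:ℝ) ≤ (m:ℝ)^2 by positivity),
      Real.sqrt_sq (show (0:ℝ) ≤ (m:ℝ) by positivity)]
  rw [hsum, ge_iff_le, mul_sub, hbk]
  have key : b ^ 2 - b * k ≤ a ^ 2 - a * k := by nlinarith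
  have : γ * m - b * k ≤ c - S := by nlinarith
  linarith
end

section
/- Let n, m ≥ 1, c > 0, let 0 ≤ 2ε < γ, and let H : ℝⁿ → ℝ² be given by H(x) = L · ReLU(Wx + b) + d, where W is a real n×n matrix, b ∈ ℝⁿ, L is a real 2×n matrix, d ∈ ℝ², and every row of W and of L has Euclidean norm at most c. Let x_1, …, x_m ∈ ℝⁿ with labels y_1, …, y_m ∈ {0,1}, and set t_i = (1,0) ∈ ℝ² if y_i = 0 and t_i = (0,1) if y_i = 1. Suppose the squared-error loss (1/m)·Σ_{i=1}^m ‖H(x_i) − t_i‖₂² is at most ε, and the set G = { i : Ĥ(x_i) = y_i } of correctly classified indices satisfies |G| ≥ γ·m. Then there exist nonnegative reals (ρ_i)_{i∈G} such that for every i ∈ G and every x' ∈ ℝⁿ with ‖x' − x_i‖₂ < ρ_i one has Ĥ(x') = Ĥ(x_i), and (1/m)·Σ_{i∈G} ρ_i ≥ (γ − √(2εγ)) / (2·√n·c²). -/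
/-!
Each coordinate of `H` is `√n c²`-Lipschitz (ReLU is 1-Lipschitz and each of `W`, `L` has rows of
norm at most `c`), so the margin `H₀ - H₁` is `2√n c²`-Lipschitz and the ball of radius
`|H₀(xᵢ) - H₁(xᵢ)| / (2√n c²)` around `xᵢ` is classified like `xᵢ`. A sample with squared loss
`ℓᵢ` has margin at least `1 - √(2ℓᵢ)`, and by Cauchy–Schwarz `∑_{i∈G} √(2ℓᵢ) ≤ √(|G| · 2εm)`;
since `s ↦ s - √(s a)` is increasing for `s ≥ a`, `|G| ≥ γm ≥ 2εm` gives total margin at least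
`γm - m√(2εγ)`.
-/

open Finset Matrix

/-- Entrywise ReLU on vectors. -/
noncomputable def relu {p : ℕ} (v : Fin p → ℝ) : Fin p → ℝ := fun i => max (v i) 0

lemma abs_dotProduct_le {p : ℕ} (u v : Fin p → ℝ) :
    |u ⬝ᵥ v| ≤ √(∑ k, u k ^ 2) * √(∑ k, v k ^ 2) := by
  rw [← Real.sqrt_mul (by positivity), ← Real.sqrt_sq_eq_abs]
  exact Real.sqrt_le_sqrt (sum_mul_sq_le_sq_mul_sq _ _ _)

section RowNormBound

variable {p q : ℕ} {A : Matrix (Fin q) (Fin p) ℝ} {c : ℝ}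

lemma abs_mulVec_apply_le (hA : ∀ k, √(∑ l, A k l ^ 2) ≤ c) (v : Fin p → ℝ) (k : Fin q) :
    |(A *ᵥ v) k| ≤ c * √(∑ l, v l ^ 2) :=
  (abs_dotProduct_le _ _).trans (mul_le_mul_of_nonneg_right (hA k) (Real.sqrt_nonneg _))

lemma sqrt_sum_sq_mulVec_le (hA : ∀ k, √(∑ l, A k l ^ 2) ≤ c) (hc : 0 ≤ c)
    (v : Fin p → ℝ) :
    √(∑ k, (A *ᵥ v) k ^ 2) ≤ √q * c * √(∑ l, v l ^ 2) := by
  have hcoord : ∀ k, (A *ᵥ v) k ^ 2 ≤ (c * √(∑ l, v l ^ 2)) ^ 2 := fun k =>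
    sq_le_sq' (abs_le.1 (abs_mulVec_apply_le hA v k)).1 (abs_le.1 (abs_mulVec_apply_le hA v k)).2
  calc √(∑ k, (A *ᵥ v) k ^ 2) ≤ √(q * (c * √(∑ l, v l ^ 2)) ^ 2) := by
        refine Real.sqrt_le_sqrt ((sum_le_sum fun k _ => hcoord k).trans_eq ?_)
        simp
    _ = √q * c * √(∑ l, v l ^ 2) := by
        rw [Real.sqrt_mul (Nat.cast_nonneg q), Real.sqrt_sq (by positivity), mul_assoc]

end RowNormBound

lemma sqrt_sum_sq_relu_sub_le {p : ℕ} (u v : Fin p → ℝ) :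
    √(∑ k, (relu u k - relu v k) ^ 2) ≤ √(∑ k, (u k - v k) ^ 2) :=
  Real.sqrt_le_sqrt <| sum_le_sum fun k _ =>
    sq_le_sq.2 (by simpa only [relu, abs_abs] using abs_max_sub_max_le_abs (u k) (v k) 0)

lemma abs_reluNet_apply_sub_le {p q r : ℕ} {W : Matrix (Fin q) (Fin p) ℝ}
    {L : Matrix (Fin r) (Fin q) ℝ} {cW cL : ℝ} (hcW : 0 ≤ cW) (hcL : 0 ≤ cL)
    (hW : ∀ k, √(∑ l, W k l ^ 2) ≤ cW) (hL : ∀ k, √(∑ l, L k l ^ 2) ≤ cL)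
    (b : Fin q → ℝ) (d : Fin r → ℝ) (a a' : Fin p → ℝ) (j : Fin r) :
    |(L *ᵥ relu (W *ᵥ a + b) + d) j - (L *ᵥ relu (W *ᵥ a' + b) + d) j|
      ≤ √q * cW * cL * √(∑ l, (a l - a' l) ^ 2) := by
  have hdiff : (L *ᵥ relu (W *ᵥ a + b) + d) j - (L *ᵥ relu (W *ᵥ a' + b) + d) j
      = (L *ᵥ (relu (W *ᵥ a + b) - relu (W *ᵥ a' + b))) j := by
    simp [mulVec_sub]
  have hpre : ∀ k, (W *ᵥ a + b) k - (W *ᵥ a' + b) k = (W *ᵥ (a - a')) k := by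
    simp [mulVec_sub]
  rw [hdiff]
  calc _ ≤ cL * √(∑ k, (relu (W *ᵥ a + b) k - relu (W *ᵥ a' + b) k) ^ 2) :=
        abs_mulVec_apply_le hL _ j
    _ ≤ cL * (√q * cW * √(∑ l, (a l - a' l) ^ 2)) := by
        refine mul_le_mul_of_nonneg_left ((sqrt_sum_sq_relu_sub_le _ _).trans ?_) hcL
        simpa only [hpre, Pi.sub_apply] using sqrt_sum_sq_mulVec_le hW hcW (a - a')
    _ = √q * cW * cL * √(∑ l, (a l - a' l) ^ 2) := by ring

lemma pos_iff_pos_of_abs_sub_lt_abs {s t : ℝ} (h : |t - s| < |s|) : 0 < t ↔ 0 < s := by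
  rcases le_or_gt s 0 with hs | hs
  · rw [abs_of_nonpos hs] at h
    exact iff_of_false (fun ht => by linarith [(abs_sub_lt_iff.1 h).1]) hs.not_gt
  · rw [abs_of_pos hs] at h
    exact iff_of_true (by linarith [(abs_sub_lt_iff.1 h).2]) hs

lemma abs_sub_le_sqrt_two_mul_add_sq (a b : ℝ) : |a - b| ≤ √(2 * (a ^ 2 + b ^ 2)) := by
  rw [← Real.sqrt_sq_eq_abs]
  exact Real.sqrt_le_sqrt (by nlinarith [sq_nonneg (a + b)])

lemma one_sub_sqrt_two_mul_le_abs_margin (h t : Fin 2 → ℝ) (y : Fin 2)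
    (ht : ∀ j, t j = if j = y then 1 else 0) :
    1 - √(2 * ∑ j, (h j - t j) ^ 2) ≤ |h 0 - h 1| := by
  fin_cases y <;>
    simp only [ht, Fin.sum_univ_two, Fin.zero_eta, Fin.mk_one, Fin.isValue, ↓reduceIte,
      one_ne_zero, zero_ne_one, sub_zero]
  · linarith [le_abs_self (h 0 - h 1), neg_abs_le (h 0 - 1 - h 1),
      abs_sub_le_sqrt_two_mul_add_sq (h 0 - 1) (h 1)]
  · linarith [neg_abs_le (h 0 - h 1), le_abs_self (h 0 - (h 1 - 1)),
      abs_sub_le_sqrt_two_mul_add_sq (h 0) (h 1 - 1)]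

lemma sum_sqrt_le_sqrt_card_mul_sum {ι : Type*} (s : Finset ι) {g : ι → ℝ}
    (hg : ∀ i, 0 ≤ g i) : ∑ i ∈ s, √(g i) ≤ √(#s * ∑ i ∈ s, g i) := by
  simpa [Real.sqrt_mul (Nat.cast_nonneg _)] using
    Real.sum_sqrt_mul_sqrt_le s (fun _ => zero_le_one) hg

lemma sub_sqrt_mul_le_sub_sqrt_mul {a s N : ℝ} (ha : 0 ≤ a) (has : a ≤ s) (hsN : s ≤ N) :
    s - √(s * a) ≤ N - √(N * a) := by
  have hs : 0 ≤ s := ha.trans has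
  have hN : 0 ≤ N := hs.trans hsN
  have has' : √a ≤ √s := Real.sqrt_le_sqrt has
  have hsN' : √s ≤ √N := Real.sqrt_le_sqrt hsN
  have hfactor : 0 ≤ (√N - √s) * (√N + √s - √a) :=
    mul_nonneg (sub_nonneg.2 hsN') (by linarith [Real.sqrt_nonneg s])
  rw [Real.sqrt_mul hs, Real.sqrt_mul hN]
  -- `N - s - (√N - √s) √a = (√N - √s)(√N + √s - √a)`
  nlinarith [Real.sq_sqrt hs, Real.sq_sqrt hN]

lemma mul_sub_sqrt_le_sum_abs_margin {m : ℕ} {ε γ : ℝ} (hε : 0 ≤ ε) (hγ : 2 * ε ≤ γ)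
    (h t : Fin m → Fin 2 → ℝ) (y : Fin m → Fin 2)
    (ht : ∀ i j, t i j = if j = y i then 1 else 0)
    (hloss : ∑ i, ∑ j, (h i j - t i j) ^ 2 ≤ ε * m) (G : Finset (Fin m)) (hG : γ * m ≤ #G) :
    m * (γ - √(2 * ε * γ)) ≤ ∑ i ∈ G, |h i 0 - h i 1| := by
  set ℓ : Fin m → ℝ := fun i => ∑ j, (h i j - t i j) ^ 2
  have hℓ : ∀ i, 0 ≤ 2 * ℓ i := fun i => by positivity
  have hlossG : ∑ i ∈ G, 2 * ℓ i ≤ 2 * ε * m := by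
    rw [← mul_sum, mul_assoc]
    exact mul_le_mul_of_nonneg_left
      ((sum_le_sum_of_subset_of_nonneg G.subset_univ fun i _ _ => by positivity).trans hloss)
      zero_le_two
  calc m * (γ - √(2 * ε * γ)) = γ * m - √(γ * m * (2 * ε * m)) := by
        rw [show γ * m * (2 * ε * m) = m ^ 2 * (2 * ε * γ) by ring,
          Real.sqrt_mul (sq_nonneg _), Real.sqrt_sq (Nat.cast_nonneg m)]
        ring
    _ ≤ #G - √(#G * (2 * ε * m)) :=
        sub_sqrt_mul_le_sub_sqrt_mul (by positivity)
          (mul_le_mul_of_nonneg_right hγ (Nat.cast_nonneg m)) hG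
    _ ≤ #G - √(#G * ∑ i ∈ G, 2 * ℓ i) := by gcongr
    _ ≤ #G - ∑ i ∈ G, √(2 * ℓ i) := by gcongr; exact sum_sqrt_le_sqrt_card_mul_sum G hℓ
    _ = ∑ i ∈ G, (1 - √(2 * ℓ i)) := by simp [sum_sub_distrib]
    _ ≤ ∑ i ∈ G, |h i 0 - h i 1| :=
        sum_le_sum fun i _ => one_sub_sqrt_two_mul_le_abs_margin (h i) (t i) (y i) (ht i)

theorem average_robust_radius_square_loss_general (n m : ℕ) (hn : 1 ≤ n) (hm : 1 ≤ m)
    (c : ℝ) (hc : 0 < c) (ε γ : ℝ) (hε : 0 ≤ ε) (hγ : 2 * ε < γ)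
    (W : Matrix (Fin n) (Fin n) ℝ) (b : Fin n → ℝ)
    (L : Matrix (Fin 2) (Fin n) ℝ) (d : Fin 2 → ℝ)
    (hW : ∀ i, Real.sqrt (∑ j, W i j ^ 2) ≤ c)
    (hL : ∀ i, Real.sqrt (∑ j, L i j ^ 2) ≤ c)
    (H : (Fin n → ℝ) → Fin 2 → ℝ)
    (hH : ∀ x, H x = L.mulVec (relu (W.mulVec x + b)) + d)
    (Hhat : (Fin n → ℝ) → Fin 2)
    (hHhat : ∀ x, Hhat x = if H x 0 > H x 1 then 0 else 1)
    (x : Fin m → Fin n → ℝ) (y : Fin m → Fin 2)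
    (t : Fin m → Fin 2 → ℝ)
    (ht : ∀ i j, t i j = if j = y i then 1 else 0)
    (hloss : (1 / m : ℝ) * ∑ i, ∑ j, (H (x i) j - t i j) ^ 2 ≤ ε)
    (G : Finset (Fin m))
    (hacc : γ * m ≤ G.card) :
    ∃ ρ : Fin m → ℝ,
      (∀ i ∈ G, 0 ≤ ρ i) ∧
      (∀ i ∈ G, ∀ x' : Fin n → ℝ,
        Real.sqrt (∑ j, (x' j - x i j) ^ 2) < ρ i → Hhat x' = Hhat (x i)) ∧
      (1 / m : ℝ) * ∑ i ∈ G, ρ i ≥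
        (γ - Real.sqrt (2 * ε * γ)) / (2 * Real.sqrt n * c ^ 2) := by
  set f : (Fin n → ℝ) → ℝ := fun a => H a 0 - H a 1
  set K : ℝ := 2 * √n * c ^ 2
  have hK : 0 < K := by
    have : (0 : ℝ) < n := by exact_mod_cast hn
    positivity
  have hf : ∀ a a', |f a - f a'| ≤ K * √(∑ l, (a l - a' l) ^ 2) := by
    intro a a'
    have hH' : ∀ j, |H a j - H a' j| ≤ √n * c * c * √(∑ l, (a l - a' l) ^ 2) := fun j => by
      simpa only [hH] using abs_reluNet_apply_sub_le hc.le hc.le hW hL b d a a' j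
    calc |f a - f a'| = |(H a 0 - H a' 0) - (H a 1 - H a' 1)| := by
          simp only [f]; ring_nf
      _ ≤ |H a 0 - H a' 0| + |H a 1 - H a' 1| := abs_sub _ _
      _ ≤ K * √(∑ l, (a l - a' l) ^ 2) := by linarith [hH' 0, hH' 1]
  have hm' : (0 : ℝ) < m := by exact_mod_cast hm
  have hmargin := mul_sub_sqrt_le_sum_abs_margin hε hγ.le (fun i => H (x i)) t y ht
    (by rwa [one_div, inv_mul_le_iff₀ hm', mul_comm] at hloss) G hacc
  refine ⟨fun i => |f (x i)| / K, fun i _ => by positivity, ?_, ?_⟩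
  · intro i _ x' hx'
    rw [lt_div_iff₀ hK] at hx'
    have hsign := pos_iff_pos_of_abs_sub_lt_abs ((hf x' (x i)).trans_lt (by linarith))
    simp only [f, sub_pos] at hsign
    simp only [hHhat, gt_iff_lt, hsign]
  · rw [ge_iff_le, ← sum_div, ← mul_div_assoc]
    gcongr
    rw [one_div, le_inv_mul_iff₀ hm']
    exact hmargin

/-- Lower bound on the average robustness radius for a one-hidden-layer ReLU
classifier under the squared-error loss, assuming the `L_{2,∞}` norms of the weight matrices
are at most `c`, the loss is at most `ε`, and the training accuracy is at least `γ > 2ε`. -/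
theorem average_robust_radius_square_loss (n m : ℕ) (hn : 1 ≤ n) (hm : 1 ≤ m)
    (c : ℝ) (hc : 0 < c) (ε γ : ℝ) (hε : 0 ≤ ε) (hγ : 2 * ε < γ)
    (W : Matrix (Fin n) (Fin n) ℝ) (b : Fin n → ℝ)
    (L : Matrix (Fin 2) (Fin n) ℝ) (d : Fin 2 → ℝ)
    (hW : ∀ i, Real.sqrt (∑ j, W i j ^ 2) ≤ c)
    (hL : ∀ i, Real.sqrt (∑ j, L i j ^ 2) ≤ c)
    (H : (Fin n → ℝ) → Fin 2 → ℝ)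
    (hH : ∀ x, H x = L.mulVec (relu (W.mulVec x + b)) + d)
    (Hhat : (Fin n → ℝ) → Fin 2)
    (hHhat : ∀ x, Hhat x = if H x 0 > H x 1 then 0 else 1)
    (x : Fin m → Fin n → ℝ) (y : Fin m → Fin 2)
    (t : Fin m → Fin 2 → ℝ)
    (ht : ∀ i j, t i j = if j = y i then 1 else 0)
    (hloss : (1 / m : ℝ) * ∑ i, ∑ j, (H (x i) j - t i j) ^ 2 ≤ ε)
    (G : Finset (Fin m)) (hG : ∀ i, i ∈ G ↔ Hhat (x i) = y i)
    (hacc : γ * m ≤ G.card) :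
    ∃ ρ : Fin m → ℝ,
      (∀ i ∈ G, 0 ≤ ρ i) ∧
      (∀ i ∈ G, ∀ x' : Fin n → ℝ,
        Real.sqrt (∑ j, (x' j - x i j) ^ 2) < ρ i → Hhat x' = Hhat (x i)) ∧
      (1 / m : ℝ) * ∑ i ∈ G, ρ i ≥
        (γ - Real.sqrt (2 * ε * γ)) / (2 * Real.sqrt n * c ^ 2) :=
  average_robust_radius_square_loss_general n m hn hm c hc ε γ hε hγ W b L d hW hL H hH Hhat hHhat x
    y t ht hloss G hacc
end

section
/- Let n, q ≥ 1, L ≥ 1, c ≥ 0. Let W_1, …, W_{L−1} be real n×n matrices, W_L a real q×n matrix, and b_1, …, b_{L−1} ∈ ℝⁿ, b_L ∈ ℝ^q, where every row of every W_l has Euclidean norm at most c. Define F : ℝⁿ → ℝ^q by h_0(x) = x, h_l(x) = ReLU(W_l h_{l−1}(x) + b_l) for l = 1, …, L−1, and F(x) = W_L h_{L−1}(x) + b_L. Then for all x, ε ∈ ℝⁿ, ‖F(x + ε) − F(x)‖_∞ ≤ n^{(L−1)/2} · c^L · ‖ε‖₂. -/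
/-- The netHidden layers of a fully connected ReLU network:
`netHidden W b 0 x = x` and `netHidden W b l x = ReLU(W l (netHidden W b (l-1) x) + b l)`. -/
noncomputable def netHidden {n : ℕ} (W : ℕ → Matrix (Fin n) (Fin n) ℝ) (b : ℕ → Fin n → ℝ) :
    ℕ → (Fin n → ℝ) → Fin n → ℝ
  | 0 => fun x => x
  | l + 1 => fun x => relu ((W (l + 1)).mulVec (netHidden W b l x) + b (l + 1))

/-!
Each layer is Lipschitz from `ℓ²` to `ℓ²` with constant `√n · c`: by Cauchy–Schwarz every
coordinate of `W u - W v` is at most `c ‖u - v‖₂` in absolute value, ReLU is 1-Lipschitz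
coordinatewise, and passing from a sup bound on `n` coordinates back to `ℓ²` costs `√n`.
Composing `L - 1` hidden layers and one last Cauchy–Schwarz step for the output row gives
`c · (√n · c)^(L-1)`.
-/

open Finset Matrix

lemma abs_sum_mul_le_sqrt_mul_sqrt {ι : Type*} (s : Finset ι) (f g : ι → ℝ) :
    |∑ i ∈ s, f i * g i| ≤ √(∑ i ∈ s, f i ^ 2) * √(∑ i ∈ s, g i ^ 2) := by
  rw [← Real.sqrt_sq_eq_abs, ← Real.sqrt_mul (sum_nonneg fun _ _ => sq_nonneg _)]
  exact Real.sqrt_le_sqrt (sum_mul_sq_le_sq_mul_sq s f g)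

lemma abs_mulVec_sub_mulVec_le {m ι : Type*} [Fintype ι] (A : Matrix m ι ℝ) (u v : ι → ℝ)
    (i : m) :
    |(A *ᵥ u) i - (A *ᵥ v) i| ≤ √(∑ j, A i j ^ 2) * √(∑ j, (u j - v j) ^ 2) := by
  rw [← Pi.sub_apply, ← Matrix.mulVec_sub]
  exact abs_sum_mul_le_sqrt_mul_sqrt _ _ _

lemma abs_relu_sub_relu_le {p : ℕ} (u v : Fin p → ℝ) (i : Fin p) :
    |relu u i - relu v i| ≤ |u i - v i| :=
  abs_max_sub_max_le_abs _ _ _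

lemma sqrt_sum_sq_le_of_abs_le {ι : Type*} [Fintype ι] {w : ι → ℝ} {C : ℝ} (hC : 0 ≤ C)
    (hw : ∀ i, |w i| ≤ C) :
    √(∑ i, w i ^ 2) ≤ √(Fintype.card ι) * C := by
  calc √(∑ i, w i ^ 2) ≤ √(∑ _i : ι, C ^ 2) :=
        Real.sqrt_le_sqrt <| sum_le_sum fun i _ =>
          sq_abs (w i) ▸ pow_le_pow_left₀ (abs_nonneg _) (hw i) 2
    _ = √(Fintype.card ι) * C := by
        rw [sum_const, card_univ, nsmul_eq_mul, Real.sqrt_mul (Nat.cast_nonneg _),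
          Real.sqrt_sq hC]

section Layers

variable {n : ℕ} (W : ℕ → Matrix (Fin n) (Fin n) ℝ) (b : ℕ → Fin n → ℝ) {c : ℝ}

lemma sqrt_sum_sq_netHidden_succ_sub_le (hc : 0 ≤ c) {l : ℕ}
    (hW : ∀ i, √(∑ j, W (l + 1) i j ^ 2) ≤ c) (x y : Fin n → ℝ) :
    √(∑ i, (netHidden W b (l + 1) x i - netHidden W b (l + 1) y i) ^ 2) ≤
      √n * c * √(∑ i, (netHidden W b l x i - netHidden W b l y i) ^ 2) := by
  set u := netHidden W b l x
  set v := netHidden W b l y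
  have hcoord : ∀ i, |netHidden W b (l + 1) x i - netHidden W b (l + 1) y i| ≤
      c * √(∑ j, (u j - v j) ^ 2) := fun i =>
    calc |relu (W (l + 1) *ᵥ u + b (l + 1)) i - relu (W (l + 1) *ᵥ v + b (l + 1)) i|
        ≤ |(W (l + 1) *ᵥ u) i - (W (l + 1) *ᵥ v) i| :=
          (abs_relu_sub_relu_le _ _ i).trans_eq <| by
            simp only [Pi.add_apply, add_sub_add_right_eq_sub]
      _ ≤ √(∑ j, W (l + 1) i j ^ 2) * √(∑ j, (u j - v j) ^ 2) :=
          abs_mulVec_sub_mulVec_le _ _ _ i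
      _ ≤ c * √(∑ j, (u j - v j) ^ 2) := by gcongr; exact hW i
  simpa only [Fintype.card_fin, mul_assoc] using sqrt_sum_sq_le_of_abs_le (by positivity) hcoord

lemma sqrt_sum_sq_netHidden_sub_le (hc : 0 ≤ c) {l : ℕ}
    (hW : ∀ k, 1 ≤ k → k ≤ l → ∀ i, √(∑ j, W k i j ^ 2) ≤ c) (x y : Fin n → ℝ) :
    √(∑ i, (netHidden W b l x i - netHidden W b l y i) ^ 2) ≤
      (√n * c) ^ l * √(∑ i, (x i - y i) ^ 2) := by
  induction l with
  | zero => simp [netHidden]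
  | succ l ih =>
    calc _ ≤ √n * c * √(∑ i, (netHidden W b l x i - netHidden W b l y i) ^ 2) :=
          sqrt_sum_sq_netHidden_succ_sub_le W b hc (hW (l + 1) l.succ_pos le_rfl) x y
      _ ≤ √n * c * ((√n * c) ^ l * √(∑ i, (x i - y i) ^ 2)) := by
          gcongr
          exact ih fun k hk hkl => hW k hk (hkl.trans l.le_succ)
      _ = (√n * c) ^ (l + 1) * √(∑ i, (x i - y i) ^ 2) := by ring

end Layers

lemma sqrt_pow_eq_pow_sqrt {a : ℝ} (ha : 0 ≤ a) (k : ℕ) : √(a ^ k) = √a ^ k := by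
  rw [Real.sqrt_eq_iff_eq_sq (by positivity) (by positivity), ← pow_mul, mul_comm, pow_mul,
    Real.sq_sqrt ha]

theorem deep_relu_lipschitz_general (n q L : ℕ) (hL : 1 ≤ L)
    (c : ℝ) (hc : 0 ≤ c)
    (W : ℕ → Matrix (Fin n) (Fin n) ℝ) (b : ℕ → Fin n → ℝ)
    (WL : Matrix (Fin q) (Fin n) ℝ) (bL : Fin q → ℝ)
    (hW : ∀ l, 1 ≤ l → l ≤ L - 1 → ∀ i, Real.sqrt (∑ j, W l i j ^ 2) ≤ c)
    (hWL : ∀ i, Real.sqrt (∑ j, WL i j ^ 2) ≤ c)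
    (F : (Fin n → ℝ) → Fin q → ℝ)
    (hF : ∀ x, F x = WL.mulVec (netHidden W b (L - 1) x) + bL) :
    ∀ x ε : Fin n → ℝ, ∀ j : Fin q,
      |F (x + ε) j - F x j| ≤
        Real.sqrt ((n : ℝ) ^ (L - 1)) * c ^ L * Real.sqrt (∑ i, ε i ^ 2) := by
  intro x ε j
  have hidden := sqrt_sum_sq_netHidden_sub_le W b hc hW (x + ε) x
  simp only [Pi.add_apply, add_sub_cancel_left] at hidden
  have hconst : √((n : ℝ) ^ (L - 1)) * c ^ L = c * (√n * c) ^ (L - 1) := by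
    rw [sqrt_pow_eq_pow_sqrt n.cast_nonneg, mul_pow, ← Nat.sub_add_cancel hL, pow_succ']
    simp only [Nat.add_sub_cancel]
    ring
  calc |F (x + ε) j - F x j|
      = |(WL *ᵥ netHidden W b (L - 1) (x + ε)) j - (WL *ᵥ netHidden W b (L - 1) x) j| := by
        simp only [hF, Pi.add_apply, add_sub_add_right_eq_sub]
    _ ≤ c * ((√n * c) ^ (L - 1) * √(∑ i, ε i ^ 2)) :=
        (abs_mulVec_sub_mulVec_le _ _ _ j).trans
          (mul_le_mul (hWL j) hidden (Real.sqrt_nonneg _) hc)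
    _ = √((n : ℝ) ^ (L - 1)) * c ^ L * √(∑ i, ε i ^ 2) := by rw [hconst, mul_assoc]

/-- Lipschitz bound for an `L`-layer fully connected ReLU network with netHidden
widths `n`, whose weight matrices all have rows of Euclidean norm at most `c`:
`‖F(x + ε) − F(x)‖_∞ ≤ n^{(L−1)/2} · c^L · ‖ε‖₂`. -/
theorem deep_relu_lipschitz (n q L : ℕ) (hn : 1 ≤ n) (hq : 1 ≤ q) (hL : 1 ≤ L)
    (c : ℝ) (hc : 0 ≤ c)
    (W : ℕ → Matrix (Fin n) (Fin n) ℝ) (b : ℕ → Fin n → ℝ)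
    (WL : Matrix (Fin q) (Fin n) ℝ) (bL : Fin q → ℝ)
    (hW : ∀ l, 1 ≤ l → l ≤ L - 1 → ∀ i, Real.sqrt (∑ j, W l i j ^ 2) ≤ c)
    (hWL : ∀ i, Real.sqrt (∑ j, WL i j ^ 2) ≤ c)
    (F : (Fin n → ℝ) → Fin q → ℝ)
    (hF : ∀ x, F x = WL.mulVec (netHidden W b (L - 1) x) + bL) :
    ∀ x ε : Fin n → ℝ, ∀ j : Fin q,
      |F (x + ε) j - F x j| ≤
        Real.sqrt ((n : ℝ) ^ (L - 1)) * c ^ L * Real.sqrt (∑ i, ε i ^ 2) :=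
  deep_relu_lipschitz_general n q L hL c hc W b WL bL hW hWL F hF
end

section
/- Let n, m ≥ 1, L ≥ 1, c > 0, and let 0 ≤ 2ε < γ. Let F : ℝⁿ → ℝ² be the L-layer ReLU network F(x) = W_L h_{L−1}(x) + b_L, where h_0(x) = x, h_l(x) = ReLU(W_l h_{l−1}(x) + b_l) for l = 1, …, L−1, the W_l are real n×n matrices for l < L, W_L is a real 2×n matrix, and every row of every W_l has Euclidean norm at most c. Let x_1, …, x_m ∈ ℝⁿ with labels y_1, …, y_m ∈ {0,1}, and set t_i = (1,0) if y_i = 0 and t_i = (0,1) if y_i = 1. Suppose (1/m)·Σ_{i=1}^m ‖F(x_i) − t_i‖₂² ≤ ε and the set G = { i : F̂(x_i) = y_i } satisfies |G| ≥ γ·m. Then there exist nonnegative reals (ρ_i)_{i∈G} such that for every i ∈ G and every x' ∈ ℝⁿ with ‖x' − x_i‖₂ < ρ_i one has F̂(x') = F̂(x_i), and (1/m)·Σ_{i∈G} ρ_i ≥ (γ − √(2εγ)) / (2 · n^{(L−1)/2} · c^L). -/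
lemma aux_row {n : ℕ} (a u v : Fin n → ℝ) (c : ℝ)
    (ha : ∑ j, a j ^ 2 ≤ c ^ 2) :
    (∑ j, a j * (u j - v j)) ^ 2 ≤ c ^ 2 * ∑ j, (u j - v j) ^ 2 := by
  calc (∑ j, a j * (u j - v j)) ^ 2
      ≤ (∑ j, a j ^ 2) * ∑ j, (u j - v j) ^ 2 :=
        Finset.sum_mul_sq_le_sq_mul_sq _ _ _
    _ ≤ c ^ 2 * ∑ j, (u j - v j) ^ 2 :=
        mul_le_mul_of_nonneg_right ha (Finset.sum_nonneg fun j _ => sq_nonneg _)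

lemma aux_relu_sq {p : ℕ} (u v : Fin p → ℝ) :
    ∑ j, (relu u j - relu v j) ^ 2 ≤ ∑ j, (u j - v j) ^ 2 := by
  apply Finset.sum_le_sum
  intro j _
  have h := abs_max_sub_max_le_abs (u j) (v j) 0
  calc (relu u j - relu v j) ^ 2 = |max (u j) 0 - max (v j) 0| ^ 2 := by
        rw [sq_abs]; rfl
    _ ≤ |u j - v j| ^ 2 := by
        apply pow_le_pow_left₀ (abs_nonneg _) h
    _ = (u j - v j) ^ 2 := sq_abs _

lemma aux_hidden {n : ℕ} (W : ℕ → Matrix (Fin n) (Fin n) ℝ) (b : ℕ → Fin n → ℝ)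
    (c : ℝ) (M : ℕ)
    (hW : ∀ l, 1 ≤ l → l ≤ M → ∀ i, ∑ j, W l i j ^ 2 ≤ c ^ 2) :
    ∀ l ≤ M, ∀ x x' : Fin n → ℝ,
      ∑ j, (netHidden W b l x' j - netHidden W b l x j) ^ 2
        ≤ ((n : ℝ) * c ^ 2) ^ l * ∑ j, (x' j - x j) ^ 2 := by
  intro l
  induction l with
  | zero => intro _ x x'; simp [netHidden]
  | succ l ih =>
    intro hlM x x'
    have ih' := ih (Nat.le_of_succ_le hlM) x x'
    set h' := netHidden W b l x' with hh'
    set h := netHidden W b l x with hh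
    have hstep : ∑ j, (netHidden W b (l+1) x' j - netHidden W b (l+1) x j) ^ 2
        ≤ (n : ℝ) * c ^ 2 * ∑ j, (h' j - h j) ^ 2 := by
      have h1 : ∑ j, (netHidden W b (l+1) x' j - netHidden W b (l+1) x j) ^ 2
          ≤ ∑ j, (((W (l+1)).mulVec h' + b (l+1)) j - ((W (l+1)).mulVec h + b (l+1)) j) ^ 2 := by
        show ∑ j, (relu _ j - relu _ j) ^ 2 ≤ _
        exact aux_relu_sq _ _
      refine h1.trans ?_
      have h2 : ∀ j : Fin n, (((W (l+1)).mulVec h' + b (l+1)) j - ((W (l+1)).mulVec h + b (l+1)) j) ^ 2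
          ≤ c ^ 2 * ∑ k, (h' k - h k) ^ 2 := by
        intro j
        have heq : ((W (l+1)).mulVec h' + b (l+1)) j - ((W (l+1)).mulVec h + b (l+1)) j
            = ∑ k, W (l+1) j k * (h' k - h k) := by
          simp [Matrix.mulVec, dotProduct, mul_sub, Finset.sum_sub_distrib]
        rw [heq]
        exact aux_row _ _ _ _ (hW (l+1) (Nat.le_add_left 1 l) hlM j)
      calc ∑ j, (((W (l+1)).mulVec h' + b (l+1)) j - ((W (l+1)).mulVec h + b (l+1)) j) ^ 2
          ≤ ∑ _j : Fin n, c ^ 2 * ∑ k, (h' k - h k) ^ 2 := Finset.sum_le_sum fun j _ => h2 j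
        _ = (n : ℝ) * c ^ 2 * ∑ k, (h' k - h k) ^ 2 := by
            rw [Finset.sum_const, Finset.card_univ, Fintype.card_fin, nsmul_eq_mul]; ring
    calc ∑ j, (netHidden W b (l+1) x' j - netHidden W b (l+1) x j) ^ 2
        ≤ (n : ℝ) * c ^ 2 * ∑ j, (h' j - h j) ^ 2 := hstep
      _ ≤ (n : ℝ) * c ^ 2 * (((n : ℝ) * c ^ 2) ^ l * ∑ j, (x' j - x j) ^ 2) := by
          apply mul_le_mul_of_nonneg_left ih' (by positivity)
      _ = ((n : ℝ) * c ^ 2) ^ (l + 1) * ∑ j, (x' j - x j) ^ 2 := by ring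

lemma aux_F_lip {n L : ℕ} (hn : 1 ≤ n) (hL : 1 ≤ L) (c : ℝ) (hc : 0 < c)
    (W : ℕ → Matrix (Fin n) (Fin n) ℝ) (b : ℕ → Fin n → ℝ)
    (WL : Matrix (Fin 2) (Fin n) ℝ) (bL : Fin 2 → ℝ)
    (hW2 : ∀ l, 1 ≤ l → l ≤ L - 1 → ∀ i, ∑ j, W l i j ^ 2 ≤ c ^ 2)
    (hWL2 : ∀ i, ∑ j, WL i j ^ 2 ≤ c ^ 2)
    (x x' : Fin n → ℝ) (j : Fin 2) :
    |(WL.mulVec (netHidden W b (L - 1) x') + bL) j - (WL.mulVec (netHidden W b (L - 1) x) + bL) j|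
      ≤ Real.sqrt ((n : ℝ) ^ (L - 1)) * c ^ L * Real.sqrt (∑ k, (x' k - x k) ^ 2) := by
  have hn0 : (0 : ℝ) < n := by exact_mod_cast hn
  set h' := netHidden W b (L - 1) x' with hh'
  set h := netHidden W b (L - 1) x with hh
  have heq : (WL.mulVec h' + bL) j - (WL.mulVec h + bL) j = ∑ k, WL j k * (h' k - h k) := by
    simp [Matrix.mulVec, dotProduct, mul_sub, Finset.sum_sub_distrib]
  have hsqnn : (0:ℝ) ≤ ∑ k, (x' k - x k) ^ 2 := Finset.sum_nonneg fun _ _ => sq_nonneg _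
  have h1 : ((WL.mulVec h' + bL) j - (WL.mulVec h + bL) j) ^ 2
      ≤ c ^ 2 * (((n : ℝ) * c ^ 2) ^ (L - 1) * ∑ k, (x' k - x k) ^ 2) := by
    rw [heq]
    calc (∑ k, WL j k * (h' k - h k)) ^ 2
        ≤ c ^ 2 * ∑ k, (h' k - h k) ^ 2 := aux_row _ _ _ _ (hWL2 j)
      _ ≤ c ^ 2 * (((n : ℝ) * c ^ 2) ^ (L - 1) * ∑ k, (x' k - x k) ^ 2) := by
          apply mul_le_mul_of_nonneg_left
            (aux_hidden W b c (L - 1) hW2 (L - 1) le_rfl x x') (by positivity)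
  have hE : c ^ 2 * (((n : ℝ) * c ^ 2) ^ (L - 1) * ∑ k, (x' k - x k) ^ 2)
      = (Real.sqrt ((n : ℝ) ^ (L - 1)) * c ^ L * Real.sqrt (∑ k, (x' k - x k) ^ 2)) ^ 2 := by
    have e1 : Real.sqrt ((n : ℝ) ^ (L - 1)) ^ 2 = (n : ℝ) ^ (L - 1) :=
      Real.sq_sqrt (by positivity)
    have e3 : Real.sqrt (∑ k, (x' k - x k) ^ 2) ^ 2 = ∑ k, (x' k - x k) ^ 2 :=
      Real.sq_sqrt hsqnn
    have hLL : 2 + 2 * (L - 1) = L * 2 := by omega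
    calc c ^ 2 * (((n : ℝ) * c ^ 2) ^ (L - 1) * ∑ k, (x' k - x k) ^ 2)
        = (n : ℝ) ^ (L - 1) * (c ^ 2 * (c ^ 2) ^ (L - 1)) * ∑ k, (x' k - x k) ^ 2 := by
          rw [mul_pow]; ring
      _ = (n : ℝ) ^ (L - 1) * c ^ (2 + 2 * (L - 1)) * ∑ k, (x' k - x k) ^ 2 := by
          rw [← pow_mul, ← pow_add]
      _ = (n : ℝ) ^ (L - 1) * c ^ (L * 2) * ∑ k, (x' k - x k) ^ 2 := by rw [hLL]
      _ = _ := by rw [mul_pow, mul_pow, e1, e3, ← pow_mul]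
  rw [hE] at h1
  have h2 := Real.sqrt_le_sqrt h1
  rwa [Real.sqrt_sq_eq_abs, Real.sqrt_sq (by positivity)] at h2

lemma aux_sub_le_sqrt (a b : ℝ) : b - a ≤ Real.sqrt (2 * (a ^ 2 + b ^ 2)) := by
  rcases le_or_gt (b - a) 0 with hba | hba
  · exact hba.trans (Real.sqrt_nonneg _)
  · have h1 : (b - a) ^ 2 ≤ 2 * (a ^ 2 + b ^ 2) := by nlinarith [sq_nonneg (a + b)]
    calc b - a = Real.sqrt ((b - a) ^ 2) := (Real.sqrt_sq hba.le).symm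
      _ ≤ _ := Real.sqrt_le_sqrt h1

lemma aux_arith (g m ε γ : ℝ) (hm : 0 < m) (hε : 0 ≤ ε) (hγ : 2 * ε < γ)
    (hg : γ * m ≤ g) :
    (γ - Real.sqrt (2 * ε * γ)) * m ≤ g - Real.sqrt g * Real.sqrt (2 * (ε * m)) := by
  have hγ0 : 0 < γ := by linarith
  have hγm : 0 ≤ γ * m := by positivity
  set s := Real.sqrt g with hs
  set a := Real.sqrt (γ * m) with ha
  set e := Real.sqrt (2 * (ε * m)) with he
  have hs2 : s ^ 2 = g := Real.sq_sqrt (le_trans hγm hg)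
  have ha2 : a ^ 2 = γ * m := Real.sq_sqrt hγm
  have he2 : e ^ 2 = 2 * (ε * m) := Real.sq_sqrt (by positivity)
  have hsa : a ≤ s := Real.sqrt_le_sqrt hg
  have hae : e ≤ a := Real.sqrt_le_sqrt (by nlinarith)
  have he0 : 0 ≤ e := Real.sqrt_nonneg _
  have ha0 : 0 ≤ a := Real.sqrt_nonneg _
  have hcross : Real.sqrt (2 * ε * γ) * m = e * a := by
    rw [ha, he, ← Real.sqrt_mul (by positivity),
      show 2 * (ε * m) * (γ * m) = 2 * ε * γ * m ^ 2 by ring,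
      Real.sqrt_mul (by positivity : (0:ℝ) ≤ 2 * ε * γ) (m ^ 2), Real.sqrt_sq hm.le]
  have key : a ^ 2 - e * a ≤ s ^ 2 - s * e := by
    nlinarith [mul_nonneg (sub_nonneg.mpr hsa) (by linarith : (0:ℝ) ≤ s + a - e)]
  calc (γ - Real.sqrt (2 * ε * γ)) * m = γ * m - Real.sqrt (2 * ε * γ) * m := by ring
    _ = a ^ 2 - e * a := by rw [ha2, hcross]
    _ ≤ s ^ 2 - s * e := key
    _ = g - s * e := by rw [hs2]

/-- Lower bound on the average robustness radius of an `L`-layer fully connected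
ReLU classifier with `L_{2,∞}`-normalized weights under the square-norm loss:
if the loss is at most `ε` and the training accuracy is at least `γ > 2ε`, then robust radii
`ρ i` exist with average at least `(γ − √(2εγ)) / (2 n^{(L−1)/2} c^L)`. -/
theorem deep_average_robust_radius_square_loss (n m L : ℕ) (hn : 1 ≤ n) (hm : 1 ≤ m)
    (hL : 1 ≤ L) (c : ℝ) (hc : 0 < c) (ε γ : ℝ) (hε : 0 ≤ ε) (hγ : 2 * ε < γ)
    (W : ℕ → Matrix (Fin n) (Fin n) ℝ) (b : ℕ → Fin n → ℝ)
    (WL : Matrix (Fin 2) (Fin n) ℝ) (bL : Fin 2 → ℝ)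
    (hW : ∀ l, 1 ≤ l → l ≤ L - 1 → ∀ i, Real.sqrt (∑ j, W l i j ^ 2) ≤ c)
    (hWL : ∀ i, Real.sqrt (∑ j, WL i j ^ 2) ≤ c)
    (F : (Fin n → ℝ) → Fin 2 → ℝ)
    (hF : ∀ x, F x = WL.mulVec (netHidden W b (L - 1) x) + bL)
    (Fhat : (Fin n → ℝ) → Fin 2)
    (hFhat : ∀ x, Fhat x = if F x 0 > F x 1 then 0 else 1)
    (x : Fin m → Fin n → ℝ) (y : Fin m → Fin 2)
    (t : Fin m → Fin 2 → ℝ)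
    (ht : ∀ i j, t i j = if j = y i then 1 else 0)
    (hloss : (1 / m : ℝ) * ∑ i, ∑ j, (F (x i) j - t i j) ^ 2 ≤ ε)
    (G : Finset (Fin m)) (hG : ∀ i, i ∈ G ↔ Fhat (x i) = y i)
    (hacc : γ * m ≤ G.card) :
    ∃ ρ : Fin m → ℝ,
      (∀ i ∈ G, 0 ≤ ρ i) ∧
      (∀ i ∈ G, ∀ x' : Fin n → ℝ,
        Real.sqrt (∑ j, (x' j - x i j) ^ 2) < ρ i → Fhat x' = Fhat (x i)) ∧
      (1 / m : ℝ) * ∑ i ∈ G, ρ i ≥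
        (γ - Real.sqrt (2 * ε * γ)) / (2 * Real.sqrt ((n : ℝ) ^ (L - 1)) * c ^ L) := by
  have hm0 : (0 : ℝ) < m := by exact_mod_cast hm
  have hn0 : (0 : ℝ) < n := by exact_mod_cast hn
  set K : ℝ := Real.sqrt ((n : ℝ) ^ (L - 1)) * c ^ L with hK
  have hKpos : 0 < K := by
    have h1 : 0 < (n : ℝ) ^ (L - 1) := pow_pos hn0 _
    exact mul_pos (Real.sqrt_pos.mpr h1) (pow_pos hc L)
  have h2K : (0 : ℝ) < 2 * K := by linarith
  have hW2 : ∀ l, 1 ≤ l → l ≤ L - 1 → ∀ i, ∑ j, W l i j ^ 2 ≤ c ^ 2 := by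
    intro l h1 h2 i
    have h := hW l h1 h2 i
    have hnn : 0 ≤ ∑ j, W l i j ^ 2 := Finset.sum_nonneg fun _ _ => sq_nonneg _
    calc ∑ j, W l i j ^ 2 = Real.sqrt (∑ j, W l i j ^ 2) ^ 2 := (Real.sq_sqrt hnn).symm
      _ ≤ c ^ 2 := pow_le_pow_left₀ (Real.sqrt_nonneg _) h 2
  have hWL2 : ∀ i, ∑ j, WL i j ^ 2 ≤ c ^ 2 := by
    intro i
    have h := hWL i
    have hnn : 0 ≤ ∑ j, WL i j ^ 2 := Finset.sum_nonneg fun _ _ => sq_nonneg _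
    calc ∑ j, WL i j ^ 2 = Real.sqrt (∑ j, WL i j ^ 2) ^ 2 := (Real.sq_sqrt hnn).symm
      _ ≤ c ^ 2 := pow_le_pow_left₀ (Real.sqrt_nonneg _) h 2
  have key : ∀ (x0 x' : Fin n → ℝ) (j : Fin 2),
      |F x' j - F x0 j| ≤ K * Real.sqrt (∑ k, (x' k - x0 k) ^ 2) := by
    intro x0 x' j
    rw [hF, hF]
    exact aux_F_lip hn hL c hc W b WL bL hW2 hWL2 x0 x' j
  refine ⟨fun i => |F (x i) 0 - F (x i) 1| / (2 * K), ?_, ?_, ?_⟩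
  · intro i _
    exact div_nonneg (abs_nonneg _) (by linarith)
  · intro i _ x' hd
    set D := |F (x i) 0 - F (x i) 1| with hD
    have hdn : 0 ≤ Real.sqrt (∑ j, (x' j - x i j) ^ 2) := Real.sqrt_nonneg _
    have hDdiv : 0 < D / (2 * K) := lt_of_le_of_lt hdn hd
    have hDpos : 0 < D := by
      rcases div_pos_iff.mp hDdiv with ⟨h, _⟩ | ⟨_, h⟩
      · exact h
      · linarith
    have hb : ∀ j : Fin 2, |F x' j - F (x i) j| < D / 2 := by
      intro j
      calc |F x' j - F (x i) j| ≤ K * Real.sqrt (∑ k, (x' k - x i k) ^ 2) := key (x i) x' j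
        _ < K * (D / (2 * K)) := mul_lt_mul_of_pos_left hd hKpos
        _ = D / 2 := by field_simp
    obtain ⟨h0l, h0r⟩ := abs_lt.mp (hb 0)
    obtain ⟨h1l, h1r⟩ := abs_lt.mp (hb 1)
    rcases lt_or_ge (F (x i) 1) (F (x i) 0) with hcase | hcase
    · have hDe : D = F (x i) 0 - F (x i) 1 := abs_of_pos (by linarith)
      have hlt : F x' 1 < F x' 0 := by rw [hDe] at h0l h1r; linarith
      rw [hFhat x', hFhat (x i), if_pos hcase, if_pos hlt]
    · have hDe : D = F (x i) 1 - F (x i) 0 := by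
        rw [hD, abs_of_nonpos (by linarith)]; ring
      have hle : F x' 0 ≤ F x' 1 := by rw [hDe] at h0r h1l; linarith
      rw [hFhat x', hFhat (x i), if_neg (not_lt.mpr hcase), if_neg (not_lt.mpr hle)]
  · -- the average radius bound
    have hℓnn : ∀ i : Fin m, (0 : ℝ) ≤ ∑ j, (F (x i) j - t i j) ^ 2 :=
      fun i => Finset.sum_nonneg fun _ _ => sq_nonneg _
    have hloss' : ∑ i, ∑ j, (F (x i) j - t i j) ^ 2 ≤ ε * m := by
      have h1 := mul_le_mul_of_nonneg_left hloss hm0.le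
      have h2 : (m : ℝ) * ((1 / m : ℝ) * ∑ i, ∑ j, (F (x i) j - t i j) ^ 2)
          = ∑ i, ∑ j, (F (x i) j - t i j) ^ 2 := by
        field_simp
      rw [h2] at h1
      linarith
    have hmarg : ∀ i ∈ G,
        1 - Real.sqrt (2 * ∑ j, (F (x i) j - t i j) ^ 2) ≤ |F (x i) 0 - F (x i) 1| := by
      intro i hi
      have hyi := (hG i).mp hi
      have hy2 : y i = 0 ∨ y i = 1 := by
        have : ∀ v : Fin 2, v = 0 ∨ v = 1 := by decide
        exact this (y i)
      rcases hy2 with hy | hy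
      · have ht0 : t i 0 = 1 := by rw [ht, hy]; simp
        have ht1 : t i 1 = 0 := by rw [ht, hy]; simp
        have hcls : F (x i) 1 < F (x i) 0 := by
          by_contra hcon
          rw [hFhat (x i), if_neg hcon, hy] at hyi
          exact absurd hyi (by decide)
        have habs : |F (x i) 0 - F (x i) 1| = F (x i) 0 - F (x i) 1 :=
          abs_of_pos (by linarith)
        rw [habs, show (2 : ℝ) * ∑ j, (F (x i) j - t i j) ^ 2
            = 2 * ((F (x i) 0 - 1) ^ 2 + (F (x i) 1) ^ 2) by
          rw [Fin.sum_univ_two, ht0, ht1]; ring]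
        have h := aux_sub_le_sqrt (F (x i) 0 - 1) (F (x i) 1)
        linarith
      · have ht0 : t i 0 = 0 := by rw [ht, hy]; simp
        have ht1 : t i 1 = 1 := by rw [ht, hy]; simp
        have hcls : ¬ F (x i) 1 < F (x i) 0 := by
          intro hcon
          rw [hFhat (x i), if_pos hcon, hy] at hyi
          exact absurd hyi (by decide)
        have habs : |F (x i) 0 - F (x i) 1| = F (x i) 1 - F (x i) 0 := by
          rw [abs_of_nonpos (by push_neg at hcls; linarith)]; ring
        rw [habs, show (2 : ℝ) * ∑ j, (F (x i) j - t i j) ^ 2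
            = 2 * ((F (x i) 1 - 1) ^ 2 + (F (x i) 0) ^ 2) by
          rw [Fin.sum_univ_two, ht0, ht1]; ring]
        have h := aux_sub_le_sqrt (F (x i) 1 - 1) (F (x i) 0)
        linarith
    have hG2 : ∑ i ∈ G, (2 * ∑ j, (F (x i) j - t i j) ^ 2) ≤ 2 * (ε * m) := by
      rw [← Finset.mul_sum]
      have hsub : ∑ i ∈ G, ∑ j, (F (x i) j - t i j) ^ 2
          ≤ ∑ i, ∑ j, (F (x i) j - t i j) ^ 2 :=
        Finset.sum_le_sum_of_subset_of_nonneg (Finset.subset_univ G) fun i _ _ => hℓnn i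
      linarith
    have hcs : ∑ i ∈ G, Real.sqrt (2 * ∑ j, (F (x i) j - t i j) ^ 2)
        ≤ Real.sqrt (G.card) * Real.sqrt (2 * (ε * m)) := by
      have h1 := Finset.sum_mul_sq_le_sq_mul_sq G (fun _ => (1 : ℝ))
        (fun i => Real.sqrt (2 * ∑ j, (F (x i) j - t i j) ^ 2))
      simp only [one_mul, one_pow, Finset.sum_const, nsmul_eq_mul, mul_one] at h1
      have hsq : ∑ i ∈ G, Real.sqrt (2 * ∑ j, (F (x i) j - t i j) ^ 2) ^ 2
          = ∑ i ∈ G, (2 * ∑ j, (F (x i) j - t i j) ^ 2) :=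
        Finset.sum_congr rfl fun i _ => Real.sq_sqrt (by have := hℓnn i; linarith)
      rw [hsq] at h1
      have h3 : ((G.card : ℝ)) * ∑ i ∈ G, (2 * ∑ j, (F (x i) j - t i j) ^ 2)
          ≤ (G.card : ℝ) * (2 * (ε * m)) :=
        mul_le_mul_of_nonneg_left hG2 (Nat.cast_nonneg _)
      have hnn : 0 ≤ ∑ i ∈ G, Real.sqrt (2 * ∑ j, (F (x i) j - t i j) ^ 2) :=
        Finset.sum_nonneg fun _ _ => Real.sqrt_nonneg _
      have h5 : ∑ i ∈ G, Real.sqrt (2 * ∑ j, (F (x i) j - t i j) ^ 2)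
          ≤ Real.sqrt ((G.card : ℝ) * (2 * (ε * m))) := by
        calc ∑ i ∈ G, Real.sqrt (2 * ∑ j, (F (x i) j - t i j) ^ 2)
            = Real.sqrt ((∑ i ∈ G, Real.sqrt (2 * ∑ j, (F (x i) j - t i j) ^ 2)) ^ 2) :=
              (Real.sqrt_sq hnn).symm
          _ ≤ _ := Real.sqrt_le_sqrt (h1.trans h3)
      rwa [Real.sqrt_mul (Nat.cast_nonneg _)] at h5
    have hS : (γ - Real.sqrt (2 * ε * γ)) * m ≤ ∑ i ∈ G, |F (x i) 0 - F (x i) 1| := by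
      have hlow : ∑ i ∈ G, (1 - Real.sqrt (2 * ∑ j, (F (x i) j - t i j) ^ 2))
          ≤ ∑ i ∈ G, |F (x i) 0 - F (x i) 1| := Finset.sum_le_sum hmarg
      rw [Finset.sum_sub_distrib, Finset.sum_const, nsmul_eq_mul, mul_one] at hlow
      have harith := aux_arith (G.card : ℝ) m ε γ hm0 hε hγ hacc
      linarith
    rw [ge_iff_le, show 2 * Real.sqrt ((n : ℝ) ^ (L - 1)) * c ^ L = 2 * K by
      rw [hK]; ring, ← Finset.sum_div,
      show (1 / m : ℝ) * ((∑ i ∈ G, |F (x i) 0 - F (x i) 1|) / (2 * K))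
        = ((∑ i ∈ G, |F (x i) 0 - F (x i) 1|) / m) / (2 * K) by ring]
    exact (div_le_div_iff_of_pos_right h2K).mpr ((le_div_iff₀ hm0).mpr hS)
end

section
/- Let n, m ≥ 1, L ≥ 1, c > 0, and let ε ≥ 0 and γ satisfy (ln 2)·γ > ε. Let F : ℝⁿ → ℝ² be the L-layer ReLU network F(x) = W_L h_{L−1}(x) + b_L, where h_0(x) = x, h_l(x) = ReLU(W_l h_{l−1}(x) + b_l) for l = 1, …, L−1, the W_l are real n×n matrices for l < L, W_L is a real 2×n matrix, and every row of every W_l has Euclidean norm at most c. Let x_1, …, x_m ∈ ℝⁿ with labels y_1, …, y_m ∈ {0,1}. Suppose the cross-entropy loss (1/m)·Σ_{i=1}^m ( −ln( e^{F(x_i)_{y_i}} / ( e^{F(x_i)_0} + e^{F(x_i)_1} ) ) ) is at most ε, and the set G = { i : F̂(x_i) = y_i } satisfies |G| ≥ γ·m. Then there exist nonnegative reals (ρ_i)_{i∈G} such that for every i ∈ G and every x' ∈ ℝⁿ with ‖x' − x_i‖₂ < ρ_i one has F̂(x') = F̂(x_i), and (1/m)·Σ_{i∈G} ρ_i ≥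 ((ln 2)·γ − ε) / (n^{(L−1)/2} · c^L). -/
lemma hidden_sq_lip {n : ℕ} (W : ℕ → Matrix (Fin n) (Fin n) ℝ) (b : ℕ → Fin n → ℝ)
    (c : ℝ) (M : ℕ) (hW : ∀ l, 1 ≤ l → l ≤ M → ∀ i, (∑ j, W l i j ^ 2) ≤ c ^ 2)
    (x x' : Fin n → ℝ) :
    ∀ l, l ≤ M → (∑ j, (netHidden W b l x' j - netHidden W b l x j) ^ 2)
      ≤ ((n : ℝ) * c ^ 2) ^ l * ∑ j, (x' j - x j) ^ 2 := by
  intro l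
  induction l with
  | zero => intro _; simp [netHidden]
  | succ l ih =>
    intro hlM
    have ih' := ih (le_trans (Nat.le_succ l) hlM)
    set h' := netHidden W b l x' with hh'
    set h := netHidden W b l x with hh
    have hN0 : (0:ℝ) ≤ ∑ j, (x' j - x j) ^ 2 := by positivity
    have key : ∀ j : Fin n, (netHidden W b (l+1) x' j - netHidden W b (l+1) x j) ^ 2
        ≤ c ^ 2 * ∑ k, (h' k - h k) ^ 2 := by
      intro j
      have h1 : |netHidden W b (l+1) x' j - netHidden W b (l+1) x j|
          ≤ |((W (l+1)).mulVec h' + b (l+1)) j - ((W (l+1)).mulVec h + b (l+1)) j| := by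
        simp only [netHidden, relu, ← hh', ← hh]
        exact abs_max_sub_max_le_abs _ _ _
      have h2 : ((W (l+1)).mulVec h' + b (l+1)) j - ((W (l+1)).mulVec h + b (l+1)) j
          = ∑ k, W (l+1) j k * (h' k - h k) := by
        simp only [Pi.add_apply, Matrix.mulVec, dotProduct, mul_sub,
          Finset.sum_sub_distrib]
        ring
      have h3 : (∑ k, W (l+1) j k * (h' k - h k)) ^ 2
          ≤ (∑ k, W (l+1) j k ^ 2) * ∑ k, (h' k - h k) ^ 2 :=
        Finset.sum_mul_sq_le_sq_mul_sq _ _ _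
      have h4 : (∑ k, W (l+1) j k ^ 2) ≤ c ^ 2 :=
        hW (l+1) (Nat.le_add_left 1 l) hlM j
      have h5 : (netHidden W b (l+1) x' j - netHidden W b (l+1) x j) ^ 2
          ≤ (∑ k, W (l+1) j k * (h' k - h k)) ^ 2 := by
        rw [← sq_abs (netHidden W b (l+1) x' j - netHidden W b (l+1) x j),
          ← sq_abs (∑ k, W (l+1) j k * (h' k - h k))]
        apply pow_le_pow_left₀ (abs_nonneg _)
        rw [← h2]; exact h1
      have h6 : (0:ℝ) ≤ ∑ k, (h' k - h k) ^ 2 := by positivity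
      calc (netHidden W b (l+1) x' j - netHidden W b (l+1) x j) ^ 2
          ≤ (∑ k, W (l+1) j k ^ 2) * ∑ k, (h' k - h k) ^ 2 := h5.trans h3
        _ ≤ c ^ 2 * ∑ k, (h' k - h k) ^ 2 := mul_le_mul_of_nonneg_right h4 h6
    calc (∑ j, (netHidden W b (l+1) x' j - netHidden W b (l+1) x j) ^ 2)
        ≤ ∑ _j : Fin n, c ^ 2 * ∑ k, (h' k - h k) ^ 2 :=
          Finset.sum_le_sum fun j _ => key j
      _ = (n : ℝ) * (c ^ 2 * ∑ k, (h' k - h k) ^ 2) := by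
          rw [Finset.sum_const, Finset.card_univ, Fintype.card_fin, nsmul_eq_mul]
      _ ≤ (n : ℝ) * (c ^ 2 * (((n : ℝ) * c ^ 2) ^ l * ∑ j, (x' j - x j) ^ 2)) := by
          apply mul_le_mul_of_nonneg_left _ (Nat.cast_nonneg n)
          exact mul_le_mul_of_nonneg_left ih' (sq_nonneg c)
      _ = ((n : ℝ) * c ^ 2) ^ (l + 1) * ∑ j, (x' j - x j) ^ 2 := by ring

lemma fin_two_cases (v : Fin 2) : v = 0 ∨ v = 1 := by omega

/-- Lower bound on the average robustness radius of an `L`-layer fully connected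
ReLU classifier with `L_{2,∞}`-normalized weights under the cross-entropy loss:
if the loss is at most `ε` and the training accuracy is at least `γ` with `(ln 2)·γ > ε`, then
robust radii `ρ i` exist with average at least `((ln 2)·γ − ε) / (n^{(L−1)/2} c^L)`. -/
theorem deep_average_robust_radius_cross_entropy (n m L : ℕ) (hn : 1 ≤ n) (hm : 1 ≤ m)
    (hL : 1 ≤ L) (c : ℝ) (hc : 0 < c) (ε γ : ℝ) (hε : 0 ≤ ε) (hγ : ε < Real.log 2 * γ)
    (W : ℕ → Matrix (Fin n) (Fin n) ℝ) (b : ℕ → Fin n → ℝ)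
    (WL : Matrix (Fin 2) (Fin n) ℝ) (bL : Fin 2 → ℝ)
    (hW : ∀ l, 1 ≤ l → l ≤ L - 1 → ∀ i, Real.sqrt (∑ j, W l i j ^ 2) ≤ c)
    (hWL : ∀ i, Real.sqrt (∑ j, WL i j ^ 2) ≤ c)
    (F : (Fin n → ℝ) → Fin 2 → ℝ)
    (hF : ∀ x, F x = WL.mulVec (netHidden W b (L - 1) x) + bL)
    (Fhat : (Fin n → ℝ) → Fin 2)
    (hFhat : ∀ x, Fhat x = if F x 0 > F x 1 then 0 else 1)
    (x : Fin m → Fin n → ℝ) (y : Fin m → Fin 2)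
    (hloss : (1 / m : ℝ) * ∑ i,
        (-Real.log (Real.exp (F (x i) (y i)) /
          (Real.exp (F (x i) 0) + Real.exp (F (x i) 1)))) ≤ ε)
    (G : Finset (Fin m)) (hG : ∀ i, i ∈ G ↔ Fhat (x i) = y i)
    (hacc : γ * m ≤ G.card) :
    ∃ ρ : Fin m → ℝ,
      (∀ i ∈ G, 0 ≤ ρ i) ∧
      (∀ i ∈ G, ∀ x' : Fin n → ℝ,
        Real.sqrt (∑ j, (x' j - x i j) ^ 2) < ρ i → Fhat x' = Fhat (x i)) ∧
      (1 / m : ℝ) * ∑ i ∈ G, ρ i ≥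
        (Real.log 2 * γ - ε) / (Real.sqrt ((n : ℝ) ^ (L - 1)) * c ^ L) := by
  obtain ⟨L', rfl⟩ : ∃ L', L = L' + 1 := ⟨L - 1, (Nat.succ_pred_eq_of_pos hL).symm⟩
  simp only [Nat.add_sub_cancel] at hW hF ⊢
  have hlog2 : 0 < Real.log 2 := Real.log_pos one_lt_two
  have hm' : (0:ℝ) < m := by exact_mod_cast hm
  set K : ℝ := Real.sqrt ((n : ℝ) ^ L') * c ^ (L' + 1) with hKdef
  have hnpos : (0:ℝ) < (n : ℝ) ^ L' := by positivity
  have hK : 0 < K := mul_pos (Real.sqrt_pos.mpr hnpos) (pow_pos hc _)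
  have hK2 : K ^ 2 = (n : ℝ) ^ L' * (c ^ (L' + 1)) ^ 2 := by
    rw [hKdef, mul_pow, Real.sq_sqrt hnpos.le]
  set g : Fin m → ℝ := fun i => |F (x i) 0 - F (x i) 1| with hgdef
  refine ⟨fun i => g i / (2 * K), ?_, ?_, ?_⟩
  · intro i _
    exact div_nonneg (abs_nonneg _) (by positivity)
  · -- robustness
    intro i _ x' hx'
    have hN0 : (0:ℝ) ≤ ∑ j, (x' j - x i j) ^ 2 := by positivity
    have hρpos : 0 < g i / (2 * K) := lt_of_le_of_lt (Real.sqrt_nonneg _) hx'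
    have hNlt : ∑ j, (x' j - x i j) ^ 2 < (g i / (2 * K)) ^ 2 := by
      calc ∑ j, (x' j - x i j) ^ 2
          = Real.sqrt (∑ j, (x' j - x i j) ^ 2) ^ 2 := (Real.sq_sqrt hN0).symm
        _ < (g i / (2 * K)) ^ 2 := by
            apply pow_lt_pow_left₀ hx' (Real.sqrt_nonneg _) two_ne_zero
    -- Lipschitz bound on each output coordinate
    have hWsq : ∀ l, 1 ≤ l → l ≤ L' → ∀ i, (∑ j, W l i j ^ 2) ≤ c ^ 2 := by
      intro l h1 h2 i
      calc (∑ j, W l i j ^ 2) = Real.sqrt (∑ j, W l i j ^ 2) ^ 2 :=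
            (Real.sq_sqrt (by positivity)).symm
        _ ≤ c ^ 2 := pow_le_pow_left₀ (Real.sqrt_nonneg _) (hW l h1 h2 i) 2
    have hh := hidden_sq_lip W b c L' hWsq (x i) x' L' le_rfl
    have hΔ : ∀ j : Fin 2, |F x' j - F (x i) j| < g i / 2 := by
      intro j
      have hrow : (∑ k, WL j k ^ 2) ≤ c ^ 2 := by
        calc (∑ k, WL j k ^ 2) = Real.sqrt (∑ k, WL j k ^ 2) ^ 2 :=
              (Real.sq_sqrt (by positivity)).symm
          _ ≤ c ^ 2 := pow_le_pow_left₀ (Real.sqrt_nonneg _) (hWL j) 2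
      have hdiff : F x' j - F (x i) j
          = ∑ k, WL j k * (netHidden W b L' x' k - netHidden W b L' (x i) k) := by
        simp only [hF, Pi.add_apply, Matrix.mulVec, dotProduct, mul_sub,
          Finset.sum_sub_distrib]
        ring
      have h3 : (F x' j - F (x i) j) ^ 2
          ≤ (∑ k, WL j k ^ 2) * ∑ k, (netHidden W b L' x' k - netHidden W b L' (x i) k) ^ 2 := by
        rw [hdiff]; exact Finset.sum_mul_sq_le_sq_mul_sq _ _ _
      have h6 : (0:ℝ) ≤ ∑ k, (netHidden W b L' x' k - netHidden W b L' (x i) k) ^ 2 := by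
        positivity
      have h7 : (F x' j - F (x i) j) ^ 2 ≤ K ^ 2 * ∑ k, (x' k - x i k) ^ 2 := by
        calc (F x' j - F (x i) j) ^ 2
            ≤ (∑ k, WL j k ^ 2) * ∑ k, (netHidden W b L' x' k - netHidden W b L' (x i) k) ^ 2 :=
              h3
          _ ≤ c ^ 2 * ∑ k, (netHidden W b L' x' k - netHidden W b L' (x i) k) ^ 2 :=
              mul_le_mul_of_nonneg_right hrow h6
          _ ≤ c ^ 2 * (((n : ℝ) * c ^ 2) ^ L' * ∑ k, (x' k - x i k) ^ 2) :=
              mul_le_mul_of_nonneg_left hh (sq_nonneg c)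
          _ = K ^ 2 * ∑ k, (x' k - x i k) ^ 2 := by rw [hK2, mul_pow]; ring
      apply abs_lt_of_sq_lt_sq _ (by positivity)
      calc (F x' j - F (x i) j) ^ 2
          ≤ K ^ 2 * ∑ k, (x' k - x i k) ^ 2 := h7
        _ < K ^ 2 * (g i / (2 * K)) ^ 2 :=
            mul_lt_mul_of_pos_left hNlt (by positivity)
        _ = (g i / 2) ^ 2 := by field_simp
    have h00 := abs_lt.mp (hΔ 0)
    have h11 := abs_lt.mp (hΔ 1)
    by_cases hcase : F (x i) 0 > F (x i) 1
    · have hgeq : g i = F (x i) 0 - F (x i) 1 := abs_of_pos (sub_pos.mpr hcase)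
      have : F x' 0 > F x' 1 := by
        rw [hgeq] at h00 h11; linarith [h00.1, h11.2]
      rw [hFhat, hFhat, if_pos this, if_pos hcase]
    · push_neg at hcase
      have hgeq : g i = F (x i) 1 - F (x i) 0 := by
        simp only [hgdef]; rw [abs_sub_comm]
        exact abs_of_nonneg (sub_nonneg.mpr hcase)
      have hgpos : 0 < g i := by
        by_contra hcon
        push_neg at hcon
        have : g i / (2 * K) ≤ 0 := div_nonpos_of_nonpos_of_nonneg hcon (by positivity)
        linarith
      have : ¬ (F x' 0 > F x' 1) := by
        rw [hgeq] at h00 h11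
        push_neg
        linarith [h00.2, h11.1]
      rw [hFhat, hFhat, if_neg this, if_neg (not_lt.mpr hcase)]
  · -- average radius bound
    set ℓ : Fin m → ℝ := fun i => -Real.log (Real.exp (F (x i) (y i)) /
      (Real.exp (F (x i) 0) + Real.exp (F (x i) 1))) with hℓdef
    have hpos : ∀ i : Fin m, (0:ℝ) < Real.exp (F (x i) 0) + Real.exp (F (x i) 1) := by
      intro i; positivity
    have hℓeq : ∀ i : Fin m,
        ℓ i = Real.log (Real.exp (F (x i) 0) + Real.exp (F (x i) 1)) - F (x i) (y i) := by
      intro i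
      simp only [hℓdef]
      rw [Real.log_div (Real.exp_ne_zero _) (ne_of_gt (hpos i)), Real.log_exp]
      ring
    have hℓ0 : ∀ i : Fin m, 0 ≤ ℓ i := by
      intro i
      rw [hℓeq i, sub_nonneg]
      have hle : Real.exp (F (x i) (y i)) ≤ Real.exp (F (x i) 0) + Real.exp (F (x i) 1) := by
        rcases fin_two_cases (y i) with h | h <;> rw [h] <;>
          [linarith [Real.exp_pos (F (x i) 1)]; linarith [Real.exp_pos (F (x i) 0)]]
      calc F (x i) (y i) = Real.log (Real.exp (F (x i) (y i))) := (Real.log_exp _).symm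
        _ ≤ Real.log (Real.exp (F (x i) 0) + Real.exp (F (x i) 1)) :=
            Real.log_le_log (Real.exp_pos _) hle
    have hℓG : ∀ i ∈ G, Real.log 2 - g i / 2 ≤ ℓ i := by
      intro i hi
      have e0 : Real.exp (F (x i) 0 / 2) * Real.exp (F (x i) 0 / 2) = Real.exp (F (x i) 0) := by
        rw [← Real.exp_add]; ring_nf
      have e1 : Real.exp (F (x i) 1 / 2) * Real.exp (F (x i) 1 / 2) = Real.exp (F (x i) 1) := by
        rw [← Real.exp_add]; ring_nf
      have emid : Real.exp (F (x i) 0 / 2) * Real.exp (F (x i) 1 / 2)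
          = Real.exp ((F (x i) 0 + F (x i) 1) / 2) := by
        rw [← Real.exp_add]; ring_nf
      have hsum2 : 2 * Real.exp ((F (x i) 0 + F (x i) 1) / 2)
          ≤ Real.exp (F (x i) 0) + Real.exp (F (x i) 1) := by
        nlinarith [sq_nonneg (Real.exp (F (x i) 0 / 2) - Real.exp (F (x i) 1 / 2))]
      have hlog : Real.log 2 + (F (x i) 0 + F (x i) 1) / 2
          ≤ Real.log (Real.exp (F (x i) 0) + Real.exp (F (x i) 1)) := by
        calc Real.log 2 + (F (x i) 0 + F (x i) 1) / 2
            = Real.log (2 * Real.exp ((F (x i) 0 + F (x i) 1) / 2)) := by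
              rw [Real.log_mul two_ne_zero (Real.exp_ne_zero _), Real.log_exp]
          _ ≤ Real.log (Real.exp (F (x i) 0) + Real.exp (F (x i) 1)) :=
              Real.log_le_log (by positivity) hsum2
      have hgval : F (x i) (y i) - (F (x i) 0 + F (x i) 1) / 2 = g i / 2 := by
        have hyi : Fhat (x i) = y i := (hG i).mp hi
        rw [hFhat] at hyi
        by_cases hcase : F (x i) 0 > F (x i) 1
        · rw [if_pos hcase] at hyi
          have hgeq : g i = F (x i) 0 - F (x i) 1 := abs_of_pos (sub_pos.mpr hcase)
          rw [← hyi, hgeq]; ring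
        · rw [if_neg hcase] at hyi
          push_neg at hcase
          have hgeq : g i = F (x i) 1 - F (x i) 0 := by
            simp only [hgdef]; rw [abs_sub_comm]
            exact abs_of_nonneg (sub_nonneg.mpr hcase)
          rw [← hyi, hgeq]; ring
      rw [hℓeq i]
      linarith
    have hsumℓ : ∑ i, ℓ i ≤ ε * m := by
      have h1 : (∑ i, ℓ i) = m * ((1/m : ℝ) * ∑ i, ℓ i) := by
        field_simp
      rw [h1]
      calc (m : ℝ) * ((1/m : ℝ) * ∑ i, ℓ i) ≤ m * ε :=
            mul_le_mul_of_nonneg_left hloss hm'.le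
        _ = ε * m := by ring
    have hsub : ∑ i ∈ G, ℓ i ≤ ∑ i, ℓ i :=
      Finset.sum_le_sum_of_subset_of_nonneg (Finset.subset_univ G) (fun i _ _ => hℓ0 i)
    have hGsum : ∑ i ∈ G, (Real.log 2 - g i / 2) ≤ ∑ i ∈ G, ℓ i :=
      Finset.sum_le_sum hℓG
    have hGeq : ∑ i ∈ G, (Real.log 2 - g i / 2)
        = (G.card : ℝ) * Real.log 2 - (∑ i ∈ G, g i) / 2 := by
      rw [Finset.sum_sub_distrib, Finset.sum_const, nsmul_eq_mul, Finset.sum_div]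
    have hcard : γ * m * Real.log 2 ≤ (G.card : ℝ) * Real.log 2 :=
      mul_le_mul_of_nonneg_right hacc hlog2.le
    have hS : 2 * (Real.log 2 * γ - ε) * m ≤ ∑ i ∈ G, g i := by
      rw [hGeq] at hGsum
      nlinarith
    have hsum_div : ∑ i ∈ G, g i / (2 * K) = (∑ i ∈ G, g i) / (2 * K) :=
      (Finset.sum_div _ _ _).symm
    rw [ge_iff_le, hsum_div]
    have hKm : (0:ℝ) < 2 * K * m := by positivity
    calc (Real.log 2 * γ - ε) / K
        = (2 * (Real.log 2 * γ - ε) * m) / (2 * K * m) := by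
          field_simp
      _ ≤ (∑ i ∈ G, g i) / (2 * K * m) := by
          gcongr
      _ = (1/m : ℝ) * ((∑ i ∈ G, g i) / (2 * K)) := by
          rw [one_div_mul_eq_div, div_div]
end

section
/- Let n, m ≥ 1, a₁ ≥ 0, a₂ ≥ 0, let f : ℝⁿ → ℝⁿ be any function, let λ ∈ {−1,1}^m, and let x_1, …, x_m ∈ ℝⁿ. Then sup over real n×n matrices W with ‖W‖_{2,∞} ≤ a₁ and vectors B ∈ ℝⁿ with ‖B‖_∞ ≤ a₂ of ‖ Σ_{i=1}^m λ_i · ReLU( W·ReLU(f(x_i)) + B ) ‖₂ equals √n times the sup over w ∈ ℝⁿ with ‖w‖₂ ≤ a₁ and β ∈ ℝ with |β| ≤ a₂ of | Σ_{i=1}^m λ_i · ReLU( ⟨w, ReLU(f(x_i))⟩ + β ) |. -/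
/-- Reduction of a width-`n` ReLU layer to a single neuron: for any
`f : ℝⁿ → ℝⁿ`, signs `λ ∈ {−1,1}^m`, and points `x 1, …, x m`, the supremum over matrices `W`
with `‖W‖_{2,∞} ≤ a₁` and biases `B` with `‖B‖_∞ ≤ a₂` of
`‖Σ_i λ_i ReLU(W ReLU(f(x_i)) + B)‖₂` equals `√n` times the supremum over `w` with `‖w‖₂ ≤ a₁`
and `β` with `|β| ≤ a₂` of `|Σ_i λ_i ReLU(⟨w, ReLU(f(x_i))⟩ + β)|`. -/
theorem layer_sup_eq_sqrt_n_mul_neuron_sup (n m : ℕ) (hn : 1 ≤ n) (hm : 1 ≤ m)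
    (a₁ a₂ : ℝ) (ha₁ : 0 ≤ a₁) (ha₂ : 0 ≤ a₂)
    (f : (Fin n → ℝ) → Fin n → ℝ) (lam : Fin m → ℝ)
    (hlam : ∀ i, lam i = 1 ∨ lam i = -1)
    (x : Fin m → Fin n → ℝ) :
    (⨆ p : {p : Matrix (Fin n) (Fin n) ℝ × (Fin n → ℝ) //
        (∀ i, Real.sqrt (∑ j, p.1 i j ^ 2) ≤ a₁) ∧ ∀ i, |p.2 i| ≤ a₂},
      Real.sqrt (∑ j, (∑ i, lam i *
        relu (p.1.1.mulVec (relu (f (x i))) + p.1.2) j) ^ 2)) =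
    Real.sqrt n *
      ⨆ q : {q : (Fin n → ℝ) × ℝ // Real.sqrt (∑ j, q.1 j ^ 2) ≤ a₁ ∧ |q.2| ≤ a₂},
        |∑ i, lam i * max ((∑ j, q.1.1 j * relu (f (x i)) j) + q.1.2) 0| := by
  classical
  have hlabs : ∀ i, |lam i| = 1 := fun i => by rcases hlam i with h | h <;> simp [h]
  set v : Fin m → Fin n → ℝ := fun i => relu (f (x i)) with hv
  have hvx : ∀ i, relu (f (x i)) = v i := fun i => rfl
  -- single-neuron value
  set g : (Fin n → ℝ) × ℝ → ℝ :=
    fun q => |∑ i, lam i * max ((∑ j, q.1 j * v i j) + q.2) 0| with hg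
  -- uniform bound on neuron values
  set C : ℝ := ∑ i : Fin m, (a₁ * Real.sqrt (∑ j, (v i j) ^ 2) + a₂) with hC
  have hgC : ∀ q : (Fin n → ℝ) × ℝ,
      Real.sqrt (∑ j, q.1 j ^ 2) ≤ a₁ → |q.2| ≤ a₂ → g q ≤ C := by
    intro q h1 h2
    refine (Finset.abs_sum_le_sum_abs _ _).trans (Finset.sum_le_sum fun i _ => ?_)
    rw [abs_mul, hlabs i, one_mul]
    have hmax : |max ((∑ j, q.1 j * v i j) + q.2) 0| ≤ |(∑ j, q.1 j * v i j) + q.2| := by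
      rcases le_total ((∑ j, q.1 j * v i j) + q.2) 0 with h | h
      · simp [max_eq_right h]
      · rw [max_eq_left h]
    refine hmax.trans ((abs_add_le _ _).trans (add_le_add ?_ h2))
    have hcs : (∑ j, q.1 j * v i j) ^ 2 ≤ (∑ j, q.1 j ^ 2) * ∑ j, (v i j) ^ 2 :=
      Finset.sum_mul_sq_le_sq_mul_sq _ _ _
    have h3 : |∑ j, q.1 j * v i j| ≤
        Real.sqrt (∑ j, q.1 j ^ 2) * Real.sqrt (∑ j, (v i j) ^ 2) := by
      rw [← Real.sqrt_sq_eq_abs, ← Real.sqrt_mul (by positivity)]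
      exact Real.sqrt_le_sqrt hcs
    exact h3.trans (mul_le_mul_of_nonneg_right h1 (Real.sqrt_nonneg _))
  -- nonemptiness of the two index types
  have hQne : Nonempty {q : (Fin n → ℝ) × ℝ //
      Real.sqrt (∑ j, q.1 j ^ 2) ≤ a₁ ∧ |q.2| ≤ a₂} :=
    ⟨⟨(0, 0), by constructor <;> simp [ha₁, ha₂]⟩⟩
  have hPne : Nonempty {p : Matrix (Fin n) (Fin n) ℝ × (Fin n → ℝ) //
      (∀ i, Real.sqrt (∑ j, p.1 i j ^ 2) ≤ a₁) ∧ ∀ i, |p.2 i| ≤ a₂} :=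
    ⟨⟨(0, 0), by constructor <;> intro i <;> simp [ha₁, ha₂]⟩⟩
  have hQbdd : BddAbove (Set.range fun q : {q : (Fin n → ℝ) × ℝ //
      Real.sqrt (∑ j, q.1 j ^ 2) ≤ a₁ ∧ |q.2| ≤ a₂} => g q.1) := by
    refine ⟨C, ?_⟩
    rintro _ ⟨q, rfl⟩
    exact hgC q.1 q.2.1 q.2.2
  set N : ℝ := ⨆ q : {q : (Fin n → ℝ) × ℝ //
      Real.sqrt (∑ j, q.1 j ^ 2) ≤ a₁ ∧ |q.2| ≤ a₂}, g q.1 with hN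
  have hNnonneg : 0 ≤ N := by
    obtain ⟨q₀⟩ := hQne
    exact (abs_nonneg _).trans (le_ciSup hQbdd q₀)
  -- rewrite a coordinate of the matrix expression
  have hcoord : ∀ (W : Matrix (Fin n) (Fin n) ℝ) (B : Fin n → ℝ) (j : Fin n) (i : Fin m),
      relu (W.mulVec (v i) + B) j = max ((∑ j', (W j) j' * v i j') + B j) 0 := by
    intro W B j i
    simp [relu, Matrix.mulVec, dotProduct]
  -- forward inequality: each matrix value ≤ √n * N
  have hfwd : ∀ p : {p : Matrix (Fin n) (Fin n) ℝ × (Fin n → ℝ) //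
      (∀ i, Real.sqrt (∑ j, p.1 i j ^ 2) ≤ a₁) ∧ ∀ i, |p.2 i| ≤ a₂},
      Real.sqrt (∑ j, (∑ i, lam i * relu (p.1.1.mulVec (v i) + p.1.2) j) ^ 2)
        ≤ Real.sqrt n * N := by
    intro p
    have hterm : ∀ j, (∑ i, lam i * relu (p.1.1.mulVec (v i) + p.1.2) j) ^ 2 ≤ N ^ 2 := by
      intro j
      have heq : (∑ i, lam i * relu (p.1.1.mulVec (v i) + p.1.2) j)
          = ∑ i, lam i * max ((∑ j', (p.1.1 j) j' * v i j') + p.1.2 j) 0 := by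
        refine Finset.sum_congr rfl fun i _ => by rw [hcoord]
      have hle : |∑ i, lam i * relu (p.1.1.mulVec (v i) + p.1.2) j| ≤ N := by
        rw [heq]
        exact le_ciSup hQbdd (⟨(p.1.1 j, p.1.2 j), p.2.1 j, p.2.2 j⟩ :
          {q : (Fin n → ℝ) × ℝ // Real.sqrt (∑ j, q.1 j ^ 2) ≤ a₁ ∧ |q.2| ≤ a₂})
      calc (∑ i, lam i * relu (p.1.1.mulVec (v i) + p.1.2) j) ^ 2
          = |∑ i, lam i * relu (p.1.1.mulVec (v i) + p.1.2) j| ^ 2 := (sq_abs _).symm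
        _ ≤ N ^ 2 := pow_le_pow_left₀ (abs_nonneg _) hle 2
    calc Real.sqrt (∑ j, (∑ i, lam i * relu (p.1.1.mulVec (v i) + p.1.2) j) ^ 2)
        ≤ Real.sqrt (∑ _j : Fin n, N ^ 2) :=
          Real.sqrt_le_sqrt (Finset.sum_le_sum fun j _ => hterm j)
      _ = Real.sqrt n * N := by
          rw [Finset.sum_const, Finset.card_fin, nsmul_eq_mul,
            Real.sqrt_mul (by positivity), Real.sqrt_sq hNnonneg]
  -- matrix suprema bounded above
  have hPbdd : BddAbove (Set.range fun p : {p : Matrix (Fin n) (Fin n) ℝ × (Fin n → ℝ) //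
      (∀ i, Real.sqrt (∑ j, p.1 i j ^ 2) ≤ a₁) ∧ ∀ i, |p.2 i| ≤ a₂} =>
      Real.sqrt (∑ j, (∑ i, lam i * relu (p.1.1.mulVec (v i) + p.1.2) j) ^ 2)) := by
    refine ⟨Real.sqrt n * N, ?_⟩
    rintro _ ⟨p, rfl⟩
    exact hfwd p
  simp only [hvx]
  refine le_antisymm (ciSup_le hfwd) ?_
  rw [hN, Real.mul_iSup_of_nonneg (Real.sqrt_nonneg _)]
  refine ciSup_le fun q => ?_
  -- build the constant-row matrix from a neuron
  set p : {p : Matrix (Fin n) (Fin n) ℝ × (Fin n → ℝ) //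
      (∀ i, Real.sqrt (∑ j, p.1 i j ^ 2) ≤ a₁) ∧ ∀ i, |p.2 i| ≤ a₂} :=
    ⟨(Matrix.of fun _ j' => q.1.1 j', fun _ => q.1.2),
      fun i => q.2.1, fun i => q.2.2⟩ with hp
  have hval : Real.sqrt (∑ j, (∑ i, lam i * relu (p.1.1.mulVec (v i) + p.1.2) j) ^ 2)
      = Real.sqrt n * g q.1 := by
    have heq : ∀ j : Fin n, (∑ i, lam i * relu (p.1.1.mulVec (v i) + p.1.2) j)
        = ∑ i, lam i * max ((∑ j', q.1.1 j' * v i j') + q.1.2) 0 := by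
      intro j
      refine Finset.sum_congr rfl fun i _ => ?_
      rw [hcoord]
      rfl
    simp only [heq]
    rw [Finset.sum_const, Finset.card_fin, nsmul_eq_mul,
      Real.sqrt_mul (by positivity), Real.sqrt_sq_eq_abs]
  exact hval.symm.le.trans (le_ciSup hPbdd p)
end
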